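/- arXiv:2012.05591 — 10 statements merged into one kernel-verified Lean document; each statement's English description precedes it below -/
import Mathlib

section
/- Let σ > 0, y ∈ ℝ, and let Y : ℕ → ℝ be a sequence with (1/t)·Σ_{h<t} Y_h → y as t → ∞. For hyper-parameters (m, v) with v > 0, define σ*²_t(v) = (t/σ² + 1/v)⁻¹, μ*_t(m,v) = σ*²_t(v)·(Σ_{h<t} Y_h/σ² + m/v), and C_t(m,v) = (2πσ²)^{-t/2} · √(σ*²_t(v)/v) · exp{(1/2)[μ*_t(m,v)²/σ*²_t(v) − Σ_{h<t} Y_h²/σ² − m²/v]}. Then for all (m₁, v₁) and (m₂, v₂) with v₁, v₂ > 0, the ratio C_t(m₁,v₁)/C_t(m₂,v₂) converges as t → ∞ to φ(y | m₁, v₁)/φ(y | m₂, v₂). -/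
open Real Filter Finset Topology

/-- One-dimensional Gaussian density `φ(u | μ, v)` with mean `μ` and variance `v`. -/
noncomputable def gpdf (μ v u : ℝ) : ℝ :=
  (Real.sqrt (2 * Real.pi * v))⁻¹ * Real.exp (-(u - μ) ^ 2 / (2 * v))

/-- Posterior variance `σ*²_t(v) = (t/σ² + 1/v)⁻¹`. -/
noncomputable def postVar (σ v : ℝ) (t : ℕ) : ℝ :=
  ((t : ℝ) / σ ^ 2 + 1 / v)⁻¹

/-- Posterior mean `μ*_t(m,v) = σ*²_t(v)·(Σ_{h<t} Y_h/σ² + m/v)`. -/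
noncomputable def postMean (σ : ℝ) (Y : ℕ → ℝ) (m v : ℝ) (t : ℕ) : ℝ :=
  postVar σ v t * ((∑ h ∈ Finset.range t, Y h) / σ ^ 2 + m / v)

/-- Marginal-likelihood constant
`C_t(m,v) = (2πσ²)^{-t/2}·√(σ*²_t(v)/v)·exp{(1/2)[μ*_t²/σ*²_t − Σ_{h<t} Y_h²/σ² − m²/v]}`. -/
noncomputable def Cmarg (σ : ℝ) (Y : ℕ → ℝ) (m v : ℝ) (t : ℕ) : ℝ :=
  (2 * Real.pi * σ ^ 2) ^ (-(t : ℝ) / 2) *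
    Real.sqrt (postVar σ v t / v) *
    Real.exp ((1 / 2) *
      ((postMean σ Y m v t) ^ 2 / postVar σ v t
        - (∑ h ∈ Finset.range t, (Y h) ^ 2) / σ ^ 2 - m ^ 2 / v))

lemma exponent_identity (σ : ℝ) (hσ : 0 < σ) (S m v : ℝ) (hv : 0 < v) (t : ℕ) (ht : 1 ≤ t) :
    (postVar σ v t * (S / σ ^ 2 + m / v)) ^ 2 / postVar σ v t - m ^ 2 / v
      = ((t : ℝ) / σ ^ 2) * ((1/(t:ℝ)) * S) ^ 2
        - ((1/(t:ℝ)) * S - m) ^ 2 *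
          (((t : ℝ) / σ ^ 2) * (1 / v) / ((t : ℝ) / σ ^ 2 + 1 / v)) := by
  have ht0 : (0:ℝ) < (t:ℝ) := by exact_mod_cast ht
  have hσ2 : (0:ℝ) < σ ^ 2 := by positivity
  have hab : (0:ℝ) < (t : ℝ) / σ ^ 2 + 1 / v := by positivity
  rw [postVar]
  field_simp
  ring

lemma ratio_eq (σ : ℝ) (hσ : 0 < σ) (Y : ℕ → ℝ)
    (m₁ v₁ m₂ v₂ : ℝ) (hv₁ : 0 < v₁) (hv₂ : 0 < v₂) (t : ℕ) (ht : 1 ≤ t) :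
    Cmarg σ Y m₁ v₁ t / Cmarg σ Y m₂ v₂ t =
      Real.sqrt ((1/v₁ * ((t:ℝ)/σ^2 + 1/v₂)) / (1/v₂ * ((t:ℝ)/σ^2 + 1/v₁))) *
      Real.exp ((1/2) *
        (((1/(t:ℝ)) * ∑ h ∈ Finset.range t, Y h - m₂) ^ 2 *
            (((t : ℝ) / σ ^ 2) * (1 / v₂) / ((t : ℝ) / σ ^ 2 + 1 / v₂))
         - ((1/(t:ℝ)) * ∑ h ∈ Finset.range t, Y h - m₁) ^ 2 *
            (((t : ℝ) / σ ^ 2) * (1 / v₁) / ((t : ℝ) / σ ^ 2 + 1 / v₁)))) := by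
  have ht0 : (0:ℝ) < (t:ℝ) := by exact_mod_cast ht
  have hσ2 : (0:ℝ) < σ ^ 2 := by positivity
  have hab₁ : (0:ℝ) < (t : ℝ) / σ ^ 2 + 1 / v₁ := by positivity
  have hab₂ : (0:ℝ) < (t : ℝ) / σ ^ 2 + 1 / v₂ := by positivity
  have hpv₁ : (0:ℝ) < postVar σ v₁ t := by rw [postVar]; positivity
  have hpv₂ : (0:ℝ) < postVar σ v₂ t := by rw [postVar]; positivity
  have hP : (0:ℝ) < (2 * Real.pi * σ ^ 2) ^ (-(t : ℝ) / 2) := by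
    apply Real.rpow_pos_of_pos; positivity
  have hs₂ : Real.sqrt (postVar σ v₂ t / v₂) ≠ 0 := by
    positivity
  have cancel : ∀ P s₁ e₁ s₂ e₂ : ℝ, P ≠ 0 → s₂ ≠ 0 → e₂ ≠ 0 →
      (P * s₁ * e₁) / (P * s₂ * e₂) = (s₁ / s₂) * (e₁ / e₂) := by
    intro P s₁ e₁ s₂ e₂ hP hs he
    field_simp
  rw [Cmarg, Cmarg, cancel _ _ _ _ _ (ne_of_gt hP) hs₂ (Real.exp_ne_zero _)]
  congr 1
  · rw [← Real.sqrt_div (by positivity)]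
    congr 1
    rw [postVar, postVar]
    field_simp
  · rw [← Real.exp_sub]
    congr 1
    rw [postMean, postMean]
    have h1 := exponent_identity σ hσ (∑ h ∈ Finset.range t, Y h) m₁ v₁ hv₁ t ht
    have h2 := exponent_identity σ hσ (∑ h ∈ Finset.range t, Y h) m₂ v₂ hv₂ t ht
    linear_combination (1/2 : ℝ) * h1 - (1/2 : ℝ) * h2

lemma lim_coeff (σ v : ℝ) (hσ : 0 < σ) (hv : 0 < v) :
    Tendsto (fun t : ℕ => ((t : ℝ) / σ ^ 2) * (1 / v) / ((t : ℝ) / σ ^ 2 + 1 / v))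
      atTop (𝓝 (1 / v)) := by
  have hσ2 : (0:ℝ) < σ ^ 2 := by positivity
  have hA : Tendsto (fun t : ℕ => (t : ℝ) / σ ^ 2 + 1 / v) atTop atTop := by
    apply tendsto_atTop_add_const_right
    exact Tendsto.atTop_div_const hσ2 tendsto_natCast_atTop_atTop
  have h0 : Tendsto (fun t : ℕ => (1/v) * ((t : ℝ) / σ ^ 2 + 1 / v)⁻¹) atTop (𝓝 0) := by
    simpa using (hA.inv_tendsto_atTop.const_mul (1/v))
  have heq : ∀ t : ℕ, ((t : ℝ) / σ ^ 2) * (1 / v) / ((t : ℝ) / σ ^ 2 + 1 / v)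
      = 1/v - (1/v) * ((1/v) * ((t : ℝ) / σ ^ 2 + 1 / v)⁻¹) := by
    intro t
    have hab : (0:ℝ) < (t : ℝ) / σ ^ 2 + 1 / v := by positivity
    field_simp
    ring
  simp_rw [heq]
  have := (h0.const_mul (1/v))
  have h := (tendsto_const_nhds (x := (1:ℝ)/v) (f := atTop (α := ℕ))).sub this
  simpa using h

/-- Consistency of the marginal-likelihood factors: along a data sequence whose
sample mean converges to `y`, the ratio of the marginal-likelihood constants for
two sets of hyper-parameters converges to the ratio of Gaussian densities at `y`. -/
theorem marginal_likelihood_ratio_tendsto_gaussian_ratio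
    (σ y : ℝ) (hσ : 0 < σ) (Y : ℕ → ℝ)
    (hY : Tendsto (fun t : ℕ => (1 / (t : ℝ)) * ∑ h ∈ Finset.range t, Y h)
      atTop (𝓝 y))
    (m₁ v₁ m₂ v₂ : ℝ) (hv₁ : 0 < v₁) (hv₂ : 0 < v₂) :
    Tendsto (fun t : ℕ => Cmarg σ Y m₁ v₁ t / Cmarg σ Y m₂ v₂ t) atTop
      (𝓝 (gpdf m₁ v₁ y / gpdf m₂ v₂ y)) := by
  have hσ2 : (0:ℝ) < σ ^ 2 := by positivity
  -- limit of the sqrt argument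
  have hA : Tendsto (fun t : ℕ => (t : ℝ) / σ ^ 2 + 1 / v₁) atTop atTop := by
    apply tendsto_atTop_add_const_right
    exact Tendsto.atTop_div_const hσ2 tendsto_natCast_atTop_atTop
  have hfrac : Tendsto (fun t : ℕ =>
      (1/v₁ * ((t:ℝ)/σ^2 + 1/v₂)) / (1/v₂ * ((t:ℝ)/σ^2 + 1/v₁))) atTop
      (𝓝 (v₂ / v₁)) := by
    have heq : ∀ t : ℕ, (1/v₁ * ((t:ℝ)/σ^2 + 1/v₂)) / (1/v₂ * ((t:ℝ)/σ^2 + 1/v₁))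
        = v₂/v₁ + (v₂/v₁) * ((1/v₂ - 1/v₁) * ((t:ℝ)/σ^2 + 1/v₁)⁻¹) := by
      intro t
      have hab : (0:ℝ) < (t : ℝ) / σ ^ 2 + 1 / v₁ := by positivity
      field_simp
      ring
    simp_rw [heq]
    have h0 : Tendsto (fun t : ℕ =>
        (v₂/v₁) * ((1/v₂ - 1/v₁) * ((t:ℝ)/σ^2 + 1/v₁)⁻¹)) atTop (𝓝 0) := by
      simpa using ((hA.inv_tendsto_atTop.const_mul (1/v₂ - 1/v₁)).const_mul (v₂/v₁))
    simpa using (tendsto_const_nhds (x := v₂/v₁) (f := atTop (α := ℕ))).add h0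
  have hsqrt : Tendsto (fun t : ℕ =>
      Real.sqrt ((1/v₁ * ((t:ℝ)/σ^2 + 1/v₂)) / (1/v₂ * ((t:ℝ)/σ^2 + 1/v₁)))) atTop
      (𝓝 (Real.sqrt (v₂ / v₁))) :=
    (Real.continuous_sqrt.continuousAt).tendsto.comp hfrac
  -- limit of the exponent
  have hexp : Tendsto (fun t : ℕ => Real.exp ((1/2) *
      (((1/(t:ℝ)) * ∑ h ∈ Finset.range t, Y h - m₂) ^ 2 *
          (((t : ℝ) / σ ^ 2) * (1 / v₂) / ((t : ℝ) / σ ^ 2 + 1 / v₂))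
       - ((1/(t:ℝ)) * ∑ h ∈ Finset.range t, Y h - m₁) ^ 2 *
          (((t : ℝ) / σ ^ 2) * (1 / v₁) / ((t : ℝ) / σ ^ 2 + 1 / v₁))))) atTop
      (𝓝 (Real.exp ((1/2) * ((y - m₂)^2 * (1/v₂) - (y - m₁)^2 * (1/v₁))))) := by
    apply (Real.continuous_exp.continuousAt).tendsto.comp
    apply Tendsto.const_mul
    exact Tendsto.sub
      ((((hY.sub_const m₂).pow 2).mul (lim_coeff σ v₂ hσ hv₂)))
      ((((hY.sub_const m₁).pow 2).mul (lim_coeff σ v₁ hσ hv₁)))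
  have hlim := hsqrt.mul hexp
  -- identify the limit value with the gpdf ratio
  have hval : Real.sqrt (v₂ / v₁) *
      Real.exp ((1/2) * ((y - m₂)^2 * (1/v₂) - (y - m₁)^2 * (1/v₁)))
      = gpdf m₁ v₁ y / gpdf m₂ v₂ y := by
    rw [gpdf, gpdf, mul_div_mul_comm, ← Real.exp_sub]
    have h1 : (Real.sqrt (2 * Real.pi * v₁))⁻¹ / (Real.sqrt (2 * Real.pi * v₂))⁻¹
        = Real.sqrt (v₂ / v₁) := by
      have hpi : (0:ℝ) < Real.pi := Real.pi_pos
      rw [inv_div_inv, ← Real.sqrt_div (by positivity)]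
      congr 1
      rw [mul_div_mul_left _ _ (by positivity : (2:ℝ) * Real.pi ≠ 0)]
    rw [h1]
    congr 1
    field_simp
    ring
  rw [← hval]
  apply hlim.congr'
  filter_upwards [eventually_ge_atTop 1] with t ht
  exact (ratio_eq σ hσ Y m₁ v₁ m₂ v₂ hv₁ hv₂ t ht).symm
end

section
/- Let σ > 0 with σ² > 1/(2eπ), y ∈ ℝ, m ∈ ℝ, v > 0, and let Y : ℕ → ℝ be a sequence with (1/t)·Σ_{h<t} Y_h → y and (1/t)·Σ_{h<t} Y_h² → y² + σ² as t → ∞. Define σ*²_t = (t/σ² + 1/v)⁻¹, μ*_t = σ*²_t·(Σ_{h<t} Y_h/σ² + m/v), and C_t = (2πσ²)^{-t/2} · √(σ*²_t/v) · exp{(1/2)[μ*_t²/σ*²_t − Σ_{h<t} Y_h²/σ² − m²/v]}. Then C_t → 0 as t → ∞. -/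
open Real Filter Finset Topology

/-- Degeneracy of the marginal-likelihood constant: when `σ² > 1/(2eπ)` and the
first two sample moments converge (as they do a.s. for i.i.d. `N(y, σ²)` data),
the constant `C_t` tends to zero. -/
theorem marginal_likelihood_constant_tendsto_zero
    (σ y m v : ℝ) (hσ : 0 < σ)
    (hσ2 : 1 / (2 * Real.exp 1 * Real.pi) < σ ^ 2) (hv : 0 < v) (Y : ℕ → ℝ)
    (hY1 : Tendsto (fun t : ℕ => (1 / (t : ℝ)) * ∑ h ∈ Finset.range t, Y h)
      atTop (𝓝 y))
    (hY2 : Tendsto (fun t : ℕ => (1 / (t : ℝ)) * ∑ h ∈ Finset.range t, (Y h) ^ 2)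
      atTop (𝓝 (y ^ 2 + σ ^ 2))) :
    Tendsto (fun t : ℕ => Cmarg σ Y m v t) atTop (𝓝 0) := by
  have hπ := Real.pi_pos
  have hσ2' : (0:ℝ) < σ ^ 2 := by positivity
  have hb : (0:ℝ) < 2 * Real.pi * σ ^ 2 := by positivity
  set A := Real.log (2 * Real.pi * σ ^ 2) with hA
  have hA1 : -1 < A := by
    rw [hA, show (-1:ℝ) = Real.log (Real.exp (-1)) from (Real.log_exp _).symm]
    apply Real.log_lt_log (Real.exp_pos _)
    have he := Real.exp_pos 1
    rw [Real.exp_neg]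
    rw [div_lt_iff₀ (by positivity)] at hσ2
    have h1 : (Real.exp 1)⁻¹ * Real.exp 1 = 1 := inv_mul_cancel₀ (ne_of_gt he)
    nlinarith [hσ2, he, hπ, h1]
  have hpv : ∀ t : ℕ, 0 < postVar σ v t := fun t => by
    unfold postVar; positivity
  -- the dominating sequence
  set f : ℕ → ℝ := fun t => A * (-(t:ℝ)/2) + (1/2) *
      ((postMean σ Y m v t) ^ 2 / postVar σ v t
        - (∑ h ∈ Finset.range t, (Y h) ^ 2) / σ ^ 2 - m ^ 2 / v) with hf
  have hge : ∀ t, 0 ≤ Cmarg σ Y m v t := by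
    intro t
    unfold Cmarg
    positivity
  have hle : ∀ t, Cmarg σ Y m v t ≤ Real.exp (f t) := by
    intro t
    have hpvle : postVar σ v t ≤ v := by
      unfold postVar
      have h0 : (0:ℝ) < 1/v := by positivity
      have h1 : 1/v ≤ (t:ℝ)/σ ^ 2 + 1/v := le_add_of_nonneg_left (by positivity)
      calc ((t:ℝ)/σ ^ 2 + 1/v)⁻¹ ≤ (1/v)⁻¹ := by gcongr
        _ = v := by simp
    have h1 : (2 * Real.pi * σ ^ 2) ^ (-(t:ℝ)/2) = Real.exp (A * (-(t:ℝ)/2)) := by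
      rw [hA, Real.rpow_def_of_pos hb]
    unfold Cmarg
    rw [h1, hf]
    calc Real.exp (A * (-(t:ℝ)/2)) * Real.sqrt (postVar σ v t / v) *
          Real.exp ((1/2) * ((postMean σ Y m v t) ^ 2 / postVar σ v t
            - (∑ h ∈ Finset.range t, (Y h) ^ 2) / σ ^ 2 - m ^ 2 / v))
        ≤ Real.exp (A * (-(t:ℝ)/2)) * 1 *
          Real.exp ((1/2) * ((postMean σ Y m v t) ^ 2 / postVar σ v t
            - (∑ h ∈ Finset.range t, (Y h) ^ 2) / σ ^ 2 - m ^ 2 / v)) := by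
          gcongr
          exact Real.sqrt_le_one.mpr ((div_le_one hv).mpr hpvle)
      _ = Real.exp (A * (-(t:ℝ)/2) + (1/2) * ((postMean σ Y m v t) ^ 2 / postVar σ v t
            - (∑ h ∈ Finset.range t, (Y h) ^ 2) / σ ^ 2 - m ^ 2 / v)) := by
          rw [mul_one, ← Real.exp_add]
  -- auxiliary limits
  have l1 : Tendsto (fun t : ℕ => 1/(t:ℝ)) atTop (𝓝 0) := tendsto_one_div_atTop_nhds_zero_nat
  set g : ℕ → ℝ := fun t => A * (-1/2) + (1/2) *
      (((t:ℝ) * postVar σ v t) * (((∑ h ∈ Finset.range t, Y h) / σ ^ 2 + m / v)/(t:ℝ)) ^ 2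
        - ((∑ h ∈ Finset.range t, (Y h) ^ 2)/(t:ℝ)) / σ ^ 2 - m ^ 2 / ((t:ℝ) * v)) with hg
  have c1 : Tendsto (fun t : ℕ => (t:ℝ) * postVar σ v t) atTop (𝓝 (σ ^ 2)) := by
    have heq : ∀ᶠ t : ℕ in atTop,
        (1/σ ^ 2 + (1/(t:ℝ)) * (1/v))⁻¹ = (t:ℝ) * postVar σ v t := by
      filter_upwards [eventually_ge_atTop 1] with t ht
      have ht' : (t:ℝ) ≠ 0 := Nat.cast_ne_zero.mpr (by omega)
      have hx : (0:ℝ) < (t:ℝ)/σ ^ 2 + 1/v := by positivity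
      unfold postVar
      rw [eq_comm, ← inv_inv ((t:ℝ)), ← mul_inv, inv_eq_iff_eq_inv, inv_inv]
      field_simp
    refine Tendsto.congr' heq ?_
    have h2 : Tendsto (fun t : ℕ => 1/σ ^ 2 + (1/(t:ℝ)) * (1/v)) atTop
        (𝓝 (1/σ ^ 2 + 0 * (1/v))) := tendsto_const_nhds.add (l1.mul tendsto_const_nhds)
    have h3 := h2.inv₀ (by simp; positivity)
    simpa using h3
  have c2 : Tendsto (fun t : ℕ => ((∑ h ∈ Finset.range t, Y h) / σ ^ 2 + m / v)/(t:ℝ))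
      atTop (𝓝 (y / σ ^ 2)) := by
    have heq : (fun t : ℕ => ((∑ h ∈ Finset.range t, Y h) / σ ^ 2 + m / v)/(t:ℝ))
        = fun t : ℕ => ((1/(t:ℝ)) * ∑ h ∈ Finset.range t, Y h) * (1/σ ^ 2) + (m/v) * (1/(t:ℝ)) := by
      funext t; ring
    rw [heq, show y / σ ^ 2 = y * (1/σ ^ 2) + (m/v) * 0 by ring]
    exact (hY1.mul_const _).add (tendsto_const_nhds.mul l1)
  have c3 : Tendsto (fun t : ℕ => ((∑ h ∈ Finset.range t, (Y h) ^ 2)/(t:ℝ)) / σ ^ 2)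
      atTop (𝓝 ((y ^ 2 + σ ^ 2) / σ ^ 2)) := by
    have heq : (fun t : ℕ => ((∑ h ∈ Finset.range t, (Y h) ^ 2)/(t:ℝ)) / σ ^ 2)
        = fun t : ℕ => ((1/(t:ℝ)) * ∑ h ∈ Finset.range t, (Y h) ^ 2) * (1/σ ^ 2) := by
      funext t; ring
    rw [heq, show (y ^ 2 + σ ^ 2) / σ ^ 2 = (y ^ 2 + σ ^ 2) * (1/σ ^ 2) by ring]
    exact hY2.mul_const _
  have c4 : Tendsto (fun t : ℕ => m ^ 2 / ((t:ℝ) * v)) atTop (𝓝 0) := by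
    have heq : (fun t : ℕ => m ^ 2 / ((t:ℝ) * v)) = fun t : ℕ => (m ^ 2 / v) * (1/(t:ℝ)) := by
      funext t; ring
    rw [heq, show (0:ℝ) = (m ^ 2 / v) * 0 by ring]
    exact tendsto_const_nhds.mul l1
  have hgL : Tendsto g atTop (𝓝 (A * (-1/2) + (1/2) *
      (σ ^ 2 * (y / σ ^ 2) ^ 2 - (y ^ 2 + σ ^ 2) / σ ^ 2 - 0))) := by
    rw [hg]
    exact tendsto_const_nhds.add ((((c1.mul (c2.pow 2)).sub c3).sub c4).const_mul _)
  have hL : A * (-1/2) + (1/2) * (σ ^ 2 * (y / σ ^ 2) ^ 2 - (y ^ 2 + σ ^ 2) / σ ^ 2 - 0) < 0 := by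
    have h1 : σ ^ 2 * (y / σ ^ 2) ^ 2 - (y ^ 2 + σ ^ 2) / σ ^ 2 - 0 = -1 := by
      field_simp
      ring
    rw [h1]
    nlinarith [hA1]
  have hfg : f =ᶠ[atTop] fun t : ℕ => (t:ℝ) * g t := by
    filter_upwards [eventually_ge_atTop 1] with t ht
    have ht' : (t:ℝ) ≠ 0 := Nat.cast_ne_zero.mpr (by omega)
    have hpv' := hpv t
    rw [hf, hg]
    unfold postMean
    have hx : ((t:ℝ)/σ ^ 2 + 1/v) ≠ 0 := by positivity
    unfold postVar
    field_simp
  have hftop : Tendsto f atTop atBot := by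
    refine Tendsto.congr' hfg.symm ?_
    exact (tendsto_natCast_atTop_atTop).atTop_mul_neg hL hgL
  have hD : Tendsto (fun t : ℕ => Real.exp (f t)) atTop (𝓝 0) :=
    Real.tendsto_exp_atBot.comp hftop
  exact tendsto_of_tendsto_of_tendsto_of_le_of_le tendsto_const_nhds hD hge hle
end

section
/- Let σ > 0 with σ² < 1/(2eπ), y ∈ ℝ, m ∈ ℝ, v > 0, and let Y : ℕ → ℝ be a sequence with (1/t)·Σ_{h<t} Y_h → y and (1/t)·Σ_{h<t} Y_h² → y² + σ² as t → ∞. Define σ*²_t = (t/σ² + 1/v)⁻¹, μ*_t = σ*²_t·(Σ_{h<t} Y_h/σ² + m/v), and C_t = (2πσ²)^{-t/2} · √(σ*²_t/v) · exp{(1/2)[μ*_t²/σ*²_t − Σ_{h<t} Y_h²/σ² − m²/v]}. Then C_t → +∞ as t → ∞. -/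
open Real Filter Finset Topology

/-- Divergence of the marginal-likelihood constant: when `σ² < 1/(2eπ)` and the
first two sample moments converge (as they do a.s. for i.i.d. `N(y, σ²)` data),
the constant `C_t` tends to `+∞`. -/
theorem marginal_likelihood_constant_tendsto_atTop
    (σ y m v : ℝ) (hσ : 0 < σ)
    (hσ2 : σ ^ 2 < 1 / (2 * Real.exp 1 * Real.pi)) (hv : 0 < v) (Y : ℕ → ℝ)
    (hY1 : Tendsto (fun t : ℕ => (1 / (t : ℝ)) * ∑ h ∈ Finset.range t, Y h)
      atTop (𝓝 y))
    (hY2 : Tendsto (fun t : ℕ => (1 / (t : ℝ)) * ∑ h ∈ Finset.range t, (Y h) ^ 2)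
      atTop (𝓝 (y ^ 2 + σ ^ 2))) :
    Tendsto (fun t : ℕ => Cmarg σ Y m v t) atTop atTop := by
  have hs2 : (0:ℝ) < σ ^ 2 := by positivity
  have hπ : (0:ℝ) < Real.pi := Real.pi_pos
  have hpv : ∀ t : ℕ, 0 < postVar σ v t := by
    intro t; unfold postVar; positivity
  -- C = exp(f)
  set f : ℕ → ℝ := fun t => -(t:ℝ)/2 * Real.log (2*Real.pi*σ^2)
      + Real.log (postVar σ v t / v) / 2
      + (1/2) * ((postMean σ Y m v t)^2 / postVar σ v t
        - (∑ h ∈ Finset.range t, (Y h)^2) / σ^2 - m^2/v) with hfdef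
  have hC : ∀ t, Cmarg σ Y m v t = Real.exp (f t) := by
    intro t
    have h1 : (0:ℝ) < 2*Real.pi*σ^2 := by positivity
    have h2 : (0:ℝ) < postVar σ v t / v := div_pos (hpv t) hv
    unfold Cmarg
    rw [Real.rpow_def_of_pos h1, Real.sqrt_eq_rpow, Real.rpow_def_of_pos h2,
      ← Real.exp_add, ← Real.exp_add]
    congr 1
    simp only [hfdef]
    ring
  -- g
  set g : ℕ → ℝ := fun t =>
    -(1/2) * Real.log (2*Real.pi*σ^2)
    + Real.log (postVar σ v t / v) / (2*(t:ℝ))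
    + (1/2) * (((t:ℝ) * postVar σ v t) *
        ((1/(t:ℝ) * ∑ h ∈ Finset.range t, Y h)/σ^2 + m/(v*(t:ℝ)))^2)
    - (1/2) * ((1/(t:ℝ) * ∑ h ∈ Finset.range t, (Y h)^2)/σ^2)
    - (1/2) * (m^2/(v*(t:ℝ))) with hgdef
  have hfg : ∀ᶠ t : ℕ in atTop, f t = (t:ℝ) * g t := by
    filter_upwards [eventually_ge_atTop 1] with t ht
    have ht0 : (t:ℝ) ≠ 0 := Nat.cast_ne_zero.mpr (by omega)
    have hpv' : postVar σ v t ≠ 0 := (hpv t).ne'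
    simp only [hfdef, hgdef, postMean]
    field_simp
    ring
  -- basic limits
  have hinv : Tendsto (fun t : ℕ => 1/(t:ℝ)) atTop (𝓝 0) :=
    tendsto_one_div_atTop_nhds_zero_nat
  have hmvt : Tendsto (fun t : ℕ => m/(v*(t:ℝ))) atTop (𝓝 0) := by
    have he : (fun t : ℕ => m/(v*(t:ℝ))) = fun t : ℕ => (m/v) * (1/(t:ℝ)) := by
      funext t; field_simp
    rw [he]
    simpa using hinv.const_mul (m/v)
  have hm2vt : Tendsto (fun t : ℕ => m^2/(v*(t:ℝ))) atTop (𝓝 0) := by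
    have he : (fun t : ℕ => m^2/(v*(t:ℝ))) = fun t : ℕ => (m^2/v) * (1/(t:ℝ)) := by
      funext t; field_simp
    rw [he]
    simpa using hinv.const_mul (m^2/v)
  -- t * postVar → σ^2
  have htpv : Tendsto (fun t : ℕ => (t:ℝ) * postVar σ v t) atTop (𝓝 (σ^2)) := by
    have h1 : Tendsto (fun t : ℕ => (σ^2)⁻¹ + (1/v) * (1/(t:ℝ))) atTop (𝓝 ((σ^2)⁻¹)) := by
      simpa using (tendsto_const_nhds (x := (σ^2)⁻¹)).add (hinv.const_mul (1/v))
    have h2 : Tendsto (fun t : ℕ => ((σ^2)⁻¹ + (1/v) * (1/(t:ℝ)))⁻¹) atTop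
        (𝓝 (((σ^2)⁻¹)⁻¹)) := h1.inv₀ (by positivity)
    rw [inv_inv] at h2
    refine h2.congr' ?_
    filter_upwards [eventually_ge_atTop 1] with t ht
    have ht0 : (t:ℝ) ≠ 0 := Nat.cast_ne_zero.mpr (by omega)
    have hne1 : (t:ℝ)/σ^2 + 1/v ≠ 0 := by positivity
    have hne2 : (σ^2)⁻¹ + (1/v) * (1/(t:ℝ)) ≠ 0 := by positivity
    unfold postVar
    field_simp
  -- log term → 0
  have hlogt : Tendsto (fun t : ℕ => Real.log (postVar σ v t / v) / (2*(t:ℝ)))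
      atTop (𝓝 0) := by
    set c : ℝ := (1/σ^2 + 1/v) * v with hc
    have hc0 : (0:ℝ) < c := by positivity
    have hupper : Tendsto (fun t : ℕ => (Real.log c + Real.log (t:ℝ)) / (2*(t:ℝ)))
        atTop (𝓝 0) := by
      have hl1 : Tendsto (fun t : ℕ => Real.log c * (1/(t:ℝ)) / 2) atTop (𝓝 0) := by
        simpa using (hinv.const_mul (Real.log c)).div_const 2
      have hl2 : Tendsto (fun t : ℕ => Real.log (t:ℝ) / (t:ℝ) / 2) atTop (𝓝 0) := by
        have h3 : Tendsto (fun t : ℕ => Real.log (t:ℝ) / (t:ℝ)) atTop (𝓝 0) :=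
          Real.isLittleO_log_id_atTop.tendsto_div_nhds_zero.comp tendsto_natCast_atTop_atTop
        simpa using h3.div_const 2
      have hsum := hl1.add hl2
      simp only [add_zero] at hsum
      refine hsum.congr' ?_
      filter_upwards [eventually_ge_atTop 1] with t ht
      have ht0 : (t:ℝ) ≠ 0 := Nat.cast_ne_zero.mpr (by omega)
      rw [mul_one_div, div_div, div_div, ← add_div, mul_comm (2:ℝ) (t:ℝ)]
    have hlower : Tendsto (fun t : ℕ => -((Real.log c + Real.log (t:ℝ)) / (2*(t:ℝ))))
        atTop (𝓝 0) := by
      simpa using hupper.neg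
    refine tendsto_of_tendsto_of_tendsto_of_le_of_le' hlower hupper ?_ ?_
    · filter_upwards [eventually_ge_atTop 1] with t ht
      have ht0 : (0:ℝ) < (t:ℝ) := by exact_mod_cast Nat.pos_of_ne_zero (by omega)
      have hwle : c⁻¹ * (t:ℝ)⁻¹ ≤ postVar σ v t / v := by
        rw [div_eq_mul_inv, postVar]
        have h1 : (t:ℝ)/σ^2 + 1/v ≤ (1/σ^2 + 1/v) * (t:ℝ) := by
          have ht1 : (1:ℝ) ≤ (t:ℝ) := by exact_mod_cast ht
          have hvv : 1/v ≤ 1/v * (t:ℝ) := by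
            calc 1/v = 1/v * 1 := (mul_one _).symm
              _ ≤ 1/v * (t:ℝ) := mul_le_mul_of_nonneg_left ht1 (by positivity)
          have hr : (1/σ^2 + 1/v) * (t:ℝ) - ((t:ℝ)/σ^2 + 1/v) = 1/v * (t:ℝ) - 1/v := by
            ring
          linarith [hvv, hr]
        calc c⁻¹ * (t:ℝ)⁻¹ = ((1/σ^2 + 1/v) * (t:ℝ))⁻¹ * v⁻¹ := by
              rw [hc, mul_inv, mul_inv]; ring
          _ ≤ ((t:ℝ)/σ^2 + 1/v)⁻¹ * v⁻¹ := by
              gcongr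
      have hlog1 : -(Real.log c + Real.log (t:ℝ)) ≤ Real.log (postVar σ v t / v) := by
        have hll := Real.log_le_log (by positivity) hwle
        rwa [Real.log_mul (show c⁻¹ ≠ 0 by positivity) (show ((t:ℝ))⁻¹ ≠ 0 from inv_ne_zero ht0.ne'),
          Real.log_inv, Real.log_inv, ← neg_add] at hll
      calc -((Real.log c + Real.log (t:ℝ)) / (2*(t:ℝ)))
          = -(Real.log c + Real.log (t:ℝ)) / (2*(t:ℝ)) := by ring
        _ ≤ Real.log (postVar σ v t / v) / (2*(t:ℝ)) := by gcongr
    · filter_upwards [eventually_ge_atTop 1] with t ht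
      have ht0 : (0:ℝ) < (t:ℝ) := by exact_mod_cast Nat.pos_of_ne_zero (by omega)
      have hle1 : postVar σ v t / v ≤ 1 := by
        rw [div_le_one hv, postVar]
        calc ((t:ℝ)/σ^2 + 1/v)⁻¹ ≤ (1/v)⁻¹ := by
              apply inv_anti₀
              · positivity
              · exact le_add_of_nonneg_left (by positivity)
          _ = v := by rw [one_div, inv_inv]
      have hln : Real.log (postVar σ v t / v) ≤ 0 :=
        Real.log_nonpos (div_pos (hpv t) hv).le hle1
      have hmid : Real.log (postVar σ v t / v) / (2*(t:ℝ)) ≤ 0 :=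
        div_nonpos_of_nonpos_of_nonneg hln (by positivity)
      have hc1 : (1:ℝ) ≤ c := by
        have hce : c = v/σ^2 + 1 := by rw [hc]; field_simp
        have : (0:ℝ) ≤ v/σ^2 := by positivity
        linarith [hce, this]
      have ht1 : (1:ℝ) ≤ (t:ℝ) := by exact_mod_cast ht
      have hub : (0:ℝ) ≤ (Real.log c + Real.log (t:ℝ)) / (2*(t:ℝ)) :=
        div_nonneg (add_nonneg (Real.log_nonneg hc1) (Real.log_nonneg ht1)) (by positivity)
      exact hmid.trans hub
  -- limit of g
  have hA : Tendsto (fun t : ℕ =>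
      (1/(t:ℝ) * ∑ h ∈ Finset.range t, Y h)/σ^2 + m/(v*(t:ℝ)))
      atTop (𝓝 (y/σ^2)) := by
    simpa using (hY1.div_const (σ^2)).add hmvt
  have hterm3 : Tendsto (fun t : ℕ => (1/2) * (((t:ℝ) * postVar σ v t) *
      ((1/(t:ℝ) * ∑ h ∈ Finset.range t, Y h)/σ^2 + m/(v*(t:ℝ)))^2))
      atTop (𝓝 ((1/2) * (σ^2 * (y/σ^2)^2))) :=
    (htpv.mul (hA.pow 2)).const_mul (1/2)
  have hterm4 : Tendsto (fun t : ℕ =>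
      (1/2) * ((1/(t:ℝ) * ∑ h ∈ Finset.range t, (Y h)^2)/σ^2))
      atTop (𝓝 ((1/2) * ((y^2 + σ^2)/σ^2))) :=
    (hY2.div_const (σ^2)).const_mul (1/2)
  have hterm5 : Tendsto (fun t : ℕ => (1/2) * (m^2/(v*(t:ℝ)))) atTop (𝓝 ((1/2) * 0)) :=
    hm2vt.const_mul (1/2)
  set L : ℝ := -(1/2) * Real.log (2*Real.pi*σ^2) + 0 + (1/2) * (σ^2 * (y/σ^2)^2)
      - (1/2) * ((y^2 + σ^2)/σ^2) - (1/2) * 0 with hLdef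
  have hg_lim : Tendsto g atTop (𝓝 L) := by
    rw [hgdef, hLdef]
    exact (((tendsto_const_nhds.add hlogt).add hterm3).sub hterm4).sub hterm5
  -- L > 0
  have hlog2 : Real.log (2*Real.pi*σ^2) < -1 := by
    have hlt : 2*Real.pi*σ^2 < Real.exp (-1) := by
      have h1 := mul_lt_mul_of_pos_left hσ2 (by positivity : (0:ℝ) < 2*Real.pi)
      have h2 : 2*Real.pi * (1/(2*Real.exp 1 * Real.pi)) = Real.exp (-1) := by
        rw [Real.exp_neg]
        field_simp [Real.exp_ne_zero]
      calc 2*Real.pi*σ^2 = 2*Real.pi * σ^2 := by ring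
        _ < 2*Real.pi * (1/(2*Real.exp 1 * Real.pi)) := h1
        _ = Real.exp (-1) := h2
    have := Real.log_lt_log (by positivity) hlt
    rwa [Real.log_exp] at this
  have hLpos : 0 < L := by
    have hLeq : L = (-(Real.log (2*Real.pi*σ^2)) - 1)/2 := by
      rw [hLdef]; field_simp; ring
    rw [hLeq]; linarith
  -- conclude
  have hmain : Tendsto (fun t : ℕ => (t:ℝ) * g t) atTop atTop :=
    Tendsto.atTop_mul_pos hLpos tendsto_natCast_atTop_atTop hg_lim
  have hftop : Tendsto f atTop atTop :=
    hmain.congr' (hfg.mono fun t h => h.symm)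
  exact (Real.tendsto_exp_atTop.comp hftop).congr fun t => (hC t).symm
end

section
/- Let n ≥ 1 be a natural number and let R be a real number with R > n. Then ∫_R^∞ r^{n-1} e^{-r²/2} dr ≤ R^n e^{-R²/2}/(R − n). -/
open Real MeasureTheory Set

lemma integOn_pow_mul_exp (k : ℕ) {R : ℝ} (hR : 0 < R) :
    IntegrableOn (fun r : ℝ => r ^ k * Real.exp (-r ^ 2 / 2)) (Set.Ioi R) := by
  have h : Integrable (fun x : ℝ => x ^ (k : ℝ) * Real.exp (-(1/2) * x ^ 2)) :=
    integrable_rpow_mul_exp_neg_mul_sq (by norm_num)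
      (by exact_mod_cast neg_one_lt_zero.trans_le (Nat.cast_nonneg k))
  refine (h.integrableOn).congr_fun (fun x hx => ?_) measurableSet_Ioi
  have hx0 : (0:ℝ) < x := hR.trans hx
  dsimp only
  rw [Real.rpow_natCast]
  congr 1
  ring

/-- Gaussian tail inequality: for `R > n`,
`∫_R^∞ r^{n-1} e^{-r²/2} dr ≤ R^n e^{-R²/2}/(R − n)`. -/
theorem gaussian_tail_moment_bound
    (n : ℕ) (hn : 1 ≤ n) (R : ℝ) (hR : (n : ℝ) < R) :
    (∫ r in Set.Ici R, r ^ (n - 1) * Real.exp (-r ^ 2 / 2)) ≤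
      R ^ n * Real.exp (-R ^ 2 / 2) / (R - n) := by
  obtain ⟨m, rfl⟩ : ∃ m, n = m + 1 := ⟨n - 1, (Nat.succ_pred_eq_of_pos hn).symm⟩
  have hn1 : (1:ℝ) ≤ (m:ℝ) + 1 := by
    have := Nat.cast_nonneg (α := ℝ) m
    linarith
  have hRn : ((m:ℝ) + 1) < R := by exact_mod_cast hR
  have hR1 : (1:ℝ) < R := lt_of_le_of_lt hn1 hRn
  have hR0 : (0:ℝ) < R := lt_trans one_pos hR1
  have hc : 0 < R - ((m:ℝ) + 1) := by linarith
  simp only [Nat.add_sub_cancel]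
  set f : ℝ → ℝ := fun r => -(r ^ (m + 1) * Real.exp (-r ^ 2 / 2)) / (R - ((m:ℝ) + 1)) with hf
  set f' : ℝ → ℝ := fun r =>
    r ^ m * (r ^ 2 - ((m:ℝ) + 1)) * Real.exp (-r ^ 2 / 2) / (R - ((m:ℝ) + 1)) with hf'
  have hderiv : ∀ x ∈ Set.Ici R, HasDerivAt f (f' x) x := by
    intro x _
    have h2 : HasDerivAt (fun r : ℝ => -r ^ 2 / 2) (-x) x := by
      have := ((hasDerivAt_pow 2 x).neg.div_const 2)
      exact this.congr_deriv (by norm_num; ring)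
    have h3 : HasDerivAt (fun r : ℝ => Real.exp (-r ^ 2 / 2))
        (Real.exp (-x ^ 2 / 2) * (-x)) x := h2.exp
    have h4 := ((hasDerivAt_pow (m + 1) x).mul h3).neg.div_const (R - ((m:ℝ) + 1))
    refine h4.congr_deriv ?_
    simp only [hf', Nat.add_sub_cancel]
    field_simp
    push_cast
    ring
  have hint' : IntegrableOn f' (Set.Ioi R) := by
    have h1 := ((integOn_pow_mul_exp (m + 2) hR0).sub
      ((integOn_pow_mul_exp m hR0).const_mul ((m:ℝ) + 1))).div_const (R - ((m:ℝ) + 1))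
    refine MeasureTheory.IntegrableOn.congr_fun h1 (fun x hx => ?_) measurableSet_Ioi
    simp only [hf', Pi.sub_apply]
    field_simp
    ring
  have hlim : Filter.Tendsto f Filter.atTop (nhds 0) := by
    have h := rpow_mul_exp_neg_mul_sq_isLittleO_exp_neg (by norm_num : (0:ℝ) < 1/2)
      ((m:ℝ) + 1)
    have h0 : Filter.Tendsto (fun x : ℝ => x ^ ((m:ℝ)+1) * Real.exp (-(1/2) * x ^ 2))
        Filter.atTop (nhds 0) :=
      h.trans_tendsto (Real.tendsto_exp_comp_nhds_zero.2
        (Filter.tendsto_id.const_mul_atTop_of_neg (by norm_num : -(1/2:ℝ) < 0)))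
    have h1 : Filter.Tendsto (fun x : ℝ => x ^ (m+1) * Real.exp (-x ^ 2 / 2))
        Filter.atTop (nhds 0) := by
      refine h0.congr' ?_
      filter_upwards [Filter.eventually_gt_atTop (0:ℝ)] with x hx
      rw [show ((m:ℝ) + 1) = ((m + 1 : ℕ) : ℝ) by push_cast; ring, Real.rpow_natCast]
      congr 1
      ring
    have := (h1.neg).div_const (R - ((m:ℝ) + 1))
    simpa using this
  have hkey : ∫ x in Set.Ioi R, f' x = R ^ (m+1) * Real.exp (-R ^ 2 / 2) / (R - ((m:ℝ)+1)) := by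
    rw [MeasureTheory.integral_Ioi_of_hasDerivAt_of_tendsto'
      (fun x hx => hderiv x hx) hint' hlim]
    simp only [hf]
    ring
  rw [MeasureTheory.integral_Ici_eq_integral_Ioi]
  push_cast
  rw [← hkey]
  refine MeasureTheory.setIntegral_mono_on (integOn_pow_mul_exp m hR0) hint'
    measurableSet_Ioi (fun x hx => ?_)
  have hx : R < x := hx
  have hx2 : R ≤ x ^ 2 := by nlinarith
  have he : (0:ℝ) < Real.exp (-x ^ 2 / 2) := Real.exp_pos _
  have hp : (0:ℝ) ≤ x ^ m := pow_nonneg (hR0.trans hx).le m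
  simp only [hf']
  rw [le_div_iff₀ hc]
  have h5 : R - ((m:ℝ)+1) ≤ x ^ 2 - ((m:ℝ)+1) := by linarith
  nlinarith [mul_le_mul_of_nonneg_left h5 (mul_nonneg hp he.le)]
end

section
/- Let n ≥ 1 be a natural number and let R be a real number with R > n. Then the standard Gaussian measure of the complement of the centered ball of radius R in ℝⁿ satisfies (2π)^{-n/2} · ∫_{{x : ‖x‖ ≥ R}} e^{-‖x‖²/2} dx ≤ n · vol(B₁ⁿ) · (2π)^{-n/2} · R^n e^{-R²/2}/(R − n), where vol(B₁ⁿ) denotes the Lebesgue volume of the unit ball of ℝⁿ. -/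
open Real MeasureTheory Set

private lemma integrableOn_pow_mul_exp (k : ℕ) {R : ℝ} (hR : 0 < R) :
    IntegrableOn (fun r : ℝ => r ^ k * Real.exp (-r ^ 2 / 2)) (Ioi R) := by
  have h := integrableOn_rpow_mul_exp_neg_mul_sq (b := 1 / 2) (by norm_num) (s := (k : ℝ))
    (lt_of_lt_of_le neg_one_lt_zero (Nat.cast_nonneg k))
  have h2 : IntegrableOn (fun x : ℝ => x ^ (k : ℝ) * Real.exp (-(1 / 2) * x ^ 2)) (Ioi R) :=
    h.mono_set (Ioi_subset_Ioi hR.le)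
  refine h2.congr_fun (fun x hx => ?_) measurableSet_Ioi
  dsimp only
  rw [Real.rpow_natCast]
  congr 1
  ring_nf

private lemma hasDeriv_aux (m : ℕ) (r : ℝ) :
    HasDerivAt (fun r : ℝ => -(r ^ (m + 1) * Real.exp (-r ^ 2 / 2)))
      (r ^ m * (r ^ 2 - (m + 1)) * Real.exp (-r ^ 2 / 2)) r := by
  have h1 : HasDerivAt (fun r : ℝ => -r ^ 2 / 2) (-r) r := by
    have := ((hasDerivAt_pow 2 r).neg.div_const 2)
    refine this.congr_deriv ?_
    simp; ring
  have h2 : HasDerivAt (fun r : ℝ => Real.exp (-r ^ 2 / 2))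
      (Real.exp (-r ^ 2 / 2) * (-r)) r := h1.exp
  have h3 := ((hasDerivAt_pow (m + 1) r).mul h2).neg
  refine h3.congr_deriv ?_
  simp only [Nat.add_sub_cancel, Nat.cast_add, Nat.cast_one]
  ring

private lemma tendsto_aux (m : ℕ) :
    Filter.Tendsto (fun r : ℝ => -(r ^ (m + 1) * Real.exp (-r ^ 2 / 2)))
      Filter.atTop (nhds 0) := by
  have h := rpow_mul_exp_neg_mul_sq_isLittleO_exp_neg (b := 1 / 2) (by norm_num) ((m : ℝ) + 1)
  have hg : Filter.Tendsto (fun x : ℝ => Real.exp (-(1 / 2) * x)) Filter.atTop (nhds 0) := by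
    apply Real.tendsto_exp_atBot.comp
    exact Filter.Tendsto.const_mul_atTop_of_neg (by norm_num) Filter.tendsto_id
  have h0 := h.tendsto_zero_of_tendsto hg
  have h0' : Filter.Tendsto (fun x : ℝ => x ^ (m + 1) * Real.exp (-x ^ 2 / 2))
      Filter.atTop (nhds 0) := by
    apply h0.congr'
    filter_upwards [Filter.eventually_gt_atTop (0 : ℝ)] with x hx
    rw [show ((m : ℝ) + 1) = ((m + 1 : ℕ) : ℝ) by push_cast; ring, Real.rpow_natCast]
    congr 1
    ring_nf
  simpa using h0'.neg

private lemma tail_bound (m : ℕ) {R : ℝ} (hR : ((m : ℝ) + 1) < R) :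
    ∫ r in Ioi R, r ^ m * Real.exp (-r ^ 2 / 2) ≤
      R ^ (m + 1) * Real.exp (-R ^ 2 / 2) / (R - (m + 1)) := by
  have hR0 : (0 : ℝ) < R := lt_of_le_of_lt (by positivity) hR
  have hRm : (0 : ℝ) < R - (m + 1) := by linarith
  have hint' : IntegrableOn (fun r : ℝ => r ^ m * (r ^ 2 - (m + 1)) * Real.exp (-r ^ 2 / 2))
      (Ioi R) := by
    have ha := integrableOn_pow_mul_exp (m + 2) hR0
    have hb := (integrableOn_pow_mul_exp m hR0).smul ((m : ℝ) + 1)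
    have hab : IntegrableOn (fun r : ℝ => r ^ (m + 2) * Real.exp (-r ^ 2 / 2) -
        ((m : ℝ) + 1) * (r ^ m * Real.exp (-r ^ 2 / 2))) (Ioi R) := ha.sub hb
    refine hab.congr_fun (fun x hx => ?_) measurableSet_Ioi
    ring
  have key : ∫ r in Ioi R, r ^ m * (r ^ 2 - (m + 1)) * Real.exp (-r ^ 2 / 2) =
      R ^ (m + 1) * Real.exp (-R ^ 2 / 2) := by
    rw [integral_Ioi_of_hasDerivAt_of_tendsto' (fun x _ => hasDeriv_aux m x) hint'
      (tendsto_aux m)]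
    ring
  have hmono : ∫ r in Ioi R, r ^ m * Real.exp (-r ^ 2 / 2) * (R - (m + 1)) ≤
      ∫ r in Ioi R, r ^ m * (r ^ 2 - (m + 1)) * Real.exp (-r ^ 2 / 2) := by
    refine setIntegral_mono_on ((integrableOn_pow_mul_exp m hR0).mul_const _) hint'
      measurableSet_Ioi (fun x hx => ?_)
    have hx' : R < x := hx
    have hxsq : R ≤ x ^ 2 := by nlinarith
    have h1 : (0 : ℝ) ≤ x ^ m * Real.exp (-x ^ 2 / 2) :=
      mul_nonneg (pow_nonneg (hR0.trans hx').le m) (Real.exp_pos _).le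
    nlinarith [h1]
  rw [integral_mul_const] at hmono
  rw [le_div_iff₀ hRm]
  calc (∫ r in Ioi R, r ^ m * Real.exp (-r ^ 2 / 2)) * (R - (m + 1)) ≤ _ := hmono
    _ = R ^ (m + 1) * Real.exp (-R ^ 2 / 2) := key

/-- Explicit Gaussian tail bound: for `R > n`, the standard Gaussian measure of the
complement of the centered ball of radius `R` in `ℝⁿ` is at most
`n · vol(B₁ⁿ) · (2π)^{-n/2} · R^n e^{-R²/2}/(R − n)`. -/
theorem gaussian_measure_complement_ball_bound
    (n : ℕ) (hn : 1 ≤ n) (R : ℝ) (hR : (n : ℝ) < R) :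
    (2 * Real.pi) ^ (-(n : ℝ) / 2) *
        ∫ x in {x : EuclideanSpace ℝ (Fin n) | R ≤ ‖x‖}, Real.exp (-‖x‖ ^ 2 / 2) ≤
      (n : ℝ) * (volume (Metric.ball (0 : EuclideanSpace ℝ (Fin n)) 1)).toReal *
        (2 * Real.pi) ^ (-(n : ℝ) / 2) *
        (R ^ n * Real.exp (-R ^ 2 / 2) / (R - n)) := by
  obtain ⟨m, rfl⟩ : ∃ m, n = m + 1 := ⟨n - 1, (Nat.succ_pred_eq_of_pos hn).symm⟩
  set E := EuclideanSpace ℝ (Fin (m + 1))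
  haveI : Nonempty (Fin (m + 1)) := ⟨0⟩
  haveI : Nontrivial E := by
    unfold E
    infer_instance
  set g : ℝ → ℝ := (Ici R).indicator (fun r => Real.exp (-r ^ 2 / 2)) with hg
  have hR0 : (0 : ℝ) < R := lt_of_le_of_lt (by positivity) hR
  have hsm : MeasurableSet {x : E | R ≤ ‖x‖} := by
    have : {x : E | R ≤ ‖x‖} = (fun x : E => ‖x‖) ⁻¹' (Ici R) := rfl
    rw [this]
    exact (measurableSet_Ici).preimage (continuous_norm.measurable)
  have hstep1 : ∫ x in {x : E | R ≤ ‖x‖}, Real.exp (-‖x‖ ^ 2 / 2) = ∫ x : E, g ‖x‖ := by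
    rw [← integral_indicator hsm]
    apply integral_congr_ae
    apply Filter.Eventually.of_forall
    intro x
    by_cases h : R ≤ ‖x‖ <;> simp [hg, Set.indicator, h, Set.mem_setOf_eq]
  have hstep2 : ∫ x : E, g ‖x‖ =
      (m + 1) • (volume (Metric.ball (0 : E) 1)).toReal •
        ∫ y in Ioi (0 : ℝ), y ^ m • g y := by
    have h := integral_fun_norm_addHaar (volume : Measure E) g
    rwa [show Module.finrank ℝ E = m + 1 from finrank_euclideanSpace_fin,
      Nat.add_sub_cancel] at h
  have hstep3 : ∫ y in Ioi (0 : ℝ), y ^ m • g y =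
      ∫ y in Ioi R, y ^ m * Real.exp (-y ^ 2 / 2) := by
    have hind : (fun y : ℝ => y ^ m • g y) =
        (Ici R).indicator (fun y => y ^ m * Real.exp (-y ^ 2 / 2)) := by
      funext y
      by_cases h : R ≤ y <;> simp [hg, Set.indicator, h]
    have hIR : Ici R ∩ Ioi (0 : ℝ) = Ici R :=
      Set.inter_eq_left.mpr (fun y hy => Set.mem_Ioi.mpr (lt_of_lt_of_le hR0 hy))
    rw [hind, integral_indicator measurableSet_Ici, Measure.restrict_restrict measurableSet_Ici,
      hIR, integral_Ici_eq_integral_Ioi]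
  have hI := tail_bound m (R := R) (by push_cast at hR ⊢; linarith)
  have hI' : ∫ r in Ioi R, r ^ m * Real.exp (-r ^ 2 / 2) ≤
      R ^ (m + 1) * Real.exp (-R ^ 2 / 2) / (R - ((m + 1 : ℕ) : ℝ)) := by push_cast; exact hI
  have hc : (0 : ℝ) ≤ (2 * Real.pi) ^ (-(((m + 1 : ℕ) : ℝ)) / 2) :=
    Real.rpow_nonneg (by positivity) _
  have hV : (0 : ℝ) ≤ (volume (Metric.ball (0 : E) 1)).toReal := ENNReal.toReal_nonneg
  rw [hstep1, hstep2, hstep3, nsmul_eq_mul, smul_eq_mul]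
  set c : ℝ := (2 * Real.pi) ^ (-(((m + 1 : ℕ) : ℝ)) / 2) with hcdef
  set V : ℝ := (volume (Metric.ball (0 : E) 1)).toReal with hVdef
  set I : ℝ := ∫ y in Ioi R, y ^ m * Real.exp (-y ^ 2 / 2) with hIdef
  have hfac : (0 : ℝ) ≤ ((m + 1 : ℕ) : ℝ) * V * c := by positivity
  calc c * (((m + 1 : ℕ) : ℝ) * (V * I)) = (((m + 1 : ℕ) : ℝ) * V * c) * I := by ring
    _ ≤ (((m + 1 : ℕ) : ℝ) * V * c) *
        (R ^ (m + 1) * Real.exp (-R ^ 2 / 2) / (R - ((m + 1 : ℕ) : ℝ))) :=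
      mul_le_mul_of_nonneg_left hI' hfac
    _ = ((m + 1 : ℕ) : ℝ) * V * c *
        (R ^ (m + 1) * Real.exp (-R ^ 2 / 2) / (R - ((m + 1 : ℕ) : ℝ))) := by ring
end

section
/- Let n ≥ 1 be a natural number. For every real t ≥ 4n² and every measurable set Ω ⊆ ℝⁿ containing the centered ball of radius √t, the difference of standard Gaussian measures satisfies (2π)^{-n/2}·[∫_Ω e^{-‖x‖²/2} dx − ∫_{{x : ‖x‖ < √t}} e^{-‖x‖²/2} dx] ≤ 2n · vol(B₁ⁿ) · (2π)^{-n/2} · t^{(n-1)/2} e^{-t/2}, where vol(B₁ⁿ) denotes the Lebesgue volume of the unit ball of ℝⁿ. -/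
open Real MeasureTheory Set

private lemma gaussian_integrable_aux (n : ℕ) :
    Integrable (fun x : EuclideanSpace ℝ (Fin n) => Real.exp (-‖x‖ ^ 2 / 2)) := by
  have h := (GaussianFourier.integrable_cexp_neg_mul_sq_norm_add
    (V := EuclideanSpace ℝ (Fin n)) (b := (1/2 : ℂ)) (by norm_num) 0 0).norm
  convert h using 2 with x
  rw [Complex.norm_exp]
  congr 1
  simp [Complex.div_re, ← Complex.ofReal_pow]
  ring

private lemma polar_aux (n : ℕ) (hn : 1 ≤ n) {s : ℝ} (hs0 : 0 < s) :
    (∫ x in (Metric.ball (0 : EuclideanSpace ℝ (Fin n)) s)ᶜ, Real.exp (-‖x‖ ^ 2 / 2))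
      = (n : ℝ) * (volume (Metric.ball (0 : EuclideanSpace ℝ (Fin n)) 1)).toReal *
        ∫ y in Ici s, y ^ (n - 1) * Real.exp (-y ^ 2 / 2) := by
  haveI : Nonempty (Fin n) := Fin.pos_iff_nonempty.mp hn
  have hFnorm : ∀ x : EuclideanSpace ℝ (Fin n),
      Set.indicator (Ici s) (fun r => Real.exp (-r ^ 2 / 2)) ‖x‖
        = Set.indicator (Metric.ball (0 : EuclideanSpace ℝ (Fin n)) s)ᶜ
            (fun x => Real.exp (-‖x‖ ^ 2 / 2)) x := by
    intro x
    by_cases hx : s ≤ ‖x‖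
    · rw [Set.indicator_of_mem (mem_Ici.mpr hx), Set.indicator_of_mem]
      simp [Metric.mem_ball, dist_zero_right, not_lt.mpr hx]
    · rw [Set.indicator_of_notMem (by simpa using hx), Set.indicator_of_notMem]
      simp only [mem_compl_iff, Metric.mem_ball, dist_zero_right, not_not]
      exact lt_of_not_ge hx
  have polar := integral_fun_norm_addHaar (volume : Measure (EuclideanSpace ℝ (Fin n)))
    (Set.indicator (Ici s) (fun r => Real.exp (-r ^ 2 / 2)))
  simp only [hFnorm, finrank_euclideanSpace_fin] at polar
  rw [← integral_indicator measurableSet_ball.compl, polar]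
  have hsm : ∀ y : ℝ, y ^ (n - 1) • Set.indicator (Ici s) (fun r => Real.exp (-r ^ 2 / 2)) y
      = Set.indicator (Ici s) (fun y => y ^ (n - 1) * Real.exp (-y ^ 2 / 2)) y := by
    intro y
    by_cases hy : y ∈ Ici s
    · rw [Set.indicator_of_mem hy, Set.indicator_of_mem hy]; simp
    · rw [Set.indicator_of_notMem hy, Set.indicator_of_notMem hy]; simp
  simp only [hsm]
  rw [setIntegral_indicator measurableSet_Ici,
    Set.inter_eq_self_of_subset_right (Set.Ici_subset_Ioi.mpr hs0)]
  simp only [nsmul_eq_mul, smul_eq_mul, measureReal_def]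
  ring

private lemma radial_bound_aux (n : ℕ) (hn : 1 ≤ n) {t : ℝ} (ht : 4 * (n : ℝ) ^ 2 ≤ t) :
    (∫ y in Ici (Real.sqrt t), y ^ (n - 1) * Real.exp (-y ^ 2 / 2))
      ≤ 2 * (Real.sqrt t ^ (n - 1) * Real.exp (-t / 2)) := by
  have hn1 : (1 : ℝ) ≤ (n : ℝ) := by exact_mod_cast hn
  have ht0 : (0 : ℝ) < t := lt_of_lt_of_le (by nlinarith) ht
  set s := Real.sqrt t with hs_def
  have hs0 : (0 : ℝ) < s := Real.sqrt_pos.2 ht0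
  have hss : s * s = t := Real.mul_self_sqrt ht0.le
  have hs2 : (2 : ℝ) ≤ s := by
    have : (2 * (n:ℝ)) ^ 2 ≤ t := by nlinarith
    nlinarith [Real.sqrt_nonneg t]
  set C : ℝ := s ^ (n - 1) * Real.exp (-t / 2) * Real.exp (t / 4) with hC_def
  set g : ℝ → ℝ := fun y => C * Real.exp (-(s / 4) * y) with hg_def
  have hpt : ∀ y ∈ Ici s, y ^ (n - 1) * Real.exp (-y ^ 2 / 2) ≤ g y := by
    intro y hy
    have hys : s ≤ y := hy
    have hy0 : (0 : ℝ) < y := lt_of_lt_of_le hs0 hys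
    have h1 : y ≤ s * Real.exp ((y - s) / s) := by
      have h := Real.add_one_le_exp ((y - s) / s)
      have h' : (y - s) / s + 1 = y / s := by field_simp; ring
      rw [h'] at h
      calc y = s * (y / s) := by field_simp
        _ ≤ s * Real.exp ((y - s) / s) := mul_le_mul_of_nonneg_left h hs0.le
    have h2 : y ^ (n - 1) ≤ s ^ (n - 1) * Real.exp (((n : ℝ) - 1) * ((y - s) / s)) := by
      calc y ^ (n - 1) ≤ (s * Real.exp ((y - s) / s)) ^ (n - 1) :=
            pow_le_pow_left₀ hy0.le h1 _
        _ = s ^ (n - 1) * Real.exp ((y - s) / s) ^ (n - 1) := mul_pow _ _ _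
        _ = s ^ (n - 1) * Real.exp (((n : ℝ) - 1) * ((y - s) / s)) := by
            rw [← Real.exp_nat_mul]
            congr 2
            rw [Nat.cast_sub hn]
            norm_num
    have h3 : Real.exp (-y ^ 2 / 2) ≤ Real.exp (-t / 2 - s * (y - s) / 2) := by
      apply Real.exp_le_exp.mpr
      nlinarith
    have h4 : ((n : ℝ) - 1) * ((y - s) / s) + (-t / 2 - s * (y - s) / 2)
        ≤ -t / 2 + t / 4 + (-(s / 4) * y) := by
      have hd : 0 ≤ y - s := by linarith
      have h5 : ((n : ℝ) - 1) ≤ s * s / 4 := by nlinarith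
      have hkey : ((n : ℝ) - 1) * ((y - s) / s) ≤ (s / 4) * (y - s) := by
        rw [mul_div_assoc', div_le_iff₀ hs0]
        calc ((n : ℝ) - 1) * (y - s) ≤ s * s / 4 * (y - s) :=
              mul_le_mul_of_nonneg_right h5 hd
          _ = s / 4 * (y - s) * s := by ring
      nlinarith
    calc y ^ (n - 1) * Real.exp (-y ^ 2 / 2)
        ≤ s ^ (n - 1) * Real.exp (((n : ℝ) - 1) * ((y - s) / s)) *
            Real.exp (-t / 2 - s * (y - s) / 2) :=
          mul_le_mul h2 h3 (Real.exp_nonneg _)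
            (mul_nonneg (pow_nonneg hs0.le _) (Real.exp_nonneg _))
      _ = s ^ (n - 1) * Real.exp (((n : ℝ) - 1) * ((y - s) / s) + (-t / 2 - s * (y - s) / 2)) := by
          rw [mul_assoc, ← Real.exp_add]
      _ ≤ s ^ (n - 1) * Real.exp (-t / 2 + t / 4 + (-(s / 4) * y)) :=
          mul_le_mul_of_nonneg_left (Real.exp_le_exp.mpr h4) (pow_nonneg hs0.le _)
      _ = g y := by
          simp only [hg_def, hC_def]
          rw [Real.exp_add, Real.exp_add]
          ring
  have hg_int : IntegrableOn g (Ici s) := by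
    apply Integrable.const_mul
    exact (integrableOn_Ici_iff_integrableOn_Ioi enorm_ne_top).mpr
      (exp_neg_integrableOn_Ioi s (by linarith))
  have hG_int : IntegrableOn (fun y => y ^ (n - 1) * Real.exp (-y ^ 2 / 2)) (Ici s) := by
    apply Integrable.mono' hg_int
    · exact (Continuous.aestronglyMeasurable (by fun_prop)).restrict
    · rw [ae_restrict_iff' measurableSet_Ici]
      filter_upwards with y hy
      rw [Real.norm_eq_abs, abs_of_nonneg (mul_nonneg
        (pow_nonneg (lt_of_lt_of_le hs0 hy).le _) (Real.exp_nonneg _))]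
      exact hpt y hy
  have hint_exp : (∫ y in Ici s, Real.exp (-(s / 4) * y)) = 4 / s * Real.exp (-(t / 4)) := by
    rw [integral_Ici_eq_integral_Ioi]
    have h := integral_comp_mul_left_Ioi (fun x => Real.exp (-x)) s
      (show (0:ℝ) < s / 4 by linarith)
    simp only [integral_exp_neg_Ioi, smul_eq_mul] at h
    have heq : (∫ y in Ioi s, Real.exp (-(s / 4) * y))
        = ∫ x in Ioi s, Real.exp (-(s / 4 * x)) := by
      congr 1; ext x; rw [neg_mul]
    rw [heq, h, show s / 4 * s = t / 4 by rw [div_mul_eq_mul_div, hss], inv_eq_one_div]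
    ring
  calc (∫ y in Ici s, y ^ (n - 1) * Real.exp (-y ^ 2 / 2)) ≤ ∫ y in Ici s, g y :=
        setIntegral_mono_on hG_int hg_int measurableSet_Ici hpt
    _ = C * (4 / s * Real.exp (-(t / 4))) := by
        rw [hg_def, MeasureTheory.integral_const_mul, hint_exp]
    _ = s ^ (n - 1) * Real.exp (-t / 2) * (4 / s) := by
        rw [hC_def, show s ^ (n - 1) * rexp (-t / 2) * rexp (t / 4) * (4 / s * rexp (-(t / 4)))
          = s ^ (n - 1) * rexp (-t / 2) * (4 / s) * (rexp (t / 4) * rexp (-(t / 4))) from by ring,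
          ← Real.exp_add]
        norm_num
    _ ≤ s ^ (n - 1) * Real.exp (-t / 2) * 2 := by
        apply mul_le_mul_of_nonneg_left _ (mul_nonneg (pow_nonneg hs0.le _) (Real.exp_nonneg _))
        rw [div_le_iff₀ hs0]
        nlinarith
    _ = 2 * (s ^ (n - 1) * Real.exp (-t / 2)) := by ring

/-- Exponential decay of the ball approximation error: for `t ≥ 4n²` and any
measurable region `Ω ⊆ ℝⁿ` containing the centered ball of radius `√t`, the error
between the standard Gaussian measures of `Ω` and of the ball is at most
`2n · vol(B₁ⁿ) · (2π)^{-n/2} · t^{(n-1)/2} e^{-t/2}`. -/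
theorem gaussian_ball_approximation_error
    (n : ℕ) (hn : 1 ≤ n) (t : ℝ) (ht : 4 * (n : ℝ) ^ 2 ≤ t)
    (Ω : Set (EuclideanSpace ℝ (Fin n))) (hΩ : MeasurableSet Ω)
    (hball : Metric.ball (0 : EuclideanSpace ℝ (Fin n)) (Real.sqrt t) ⊆ Ω) :
    (2 * Real.pi) ^ (-(n : ℝ) / 2) *
        ((∫ x in Ω, Real.exp (-‖x‖ ^ 2 / 2)) -
          ∫ x in {x : EuclideanSpace ℝ (Fin n) | ‖x‖ < Real.sqrt t},
            Real.exp (-‖x‖ ^ 2 / 2)) ≤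
      2 * (n : ℝ) * (volume (Metric.ball (0 : EuclideanSpace ℝ (Fin n)) 1)).toReal *
        (2 * Real.pi) ^ (-(n : ℝ) / 2) *
        (t ^ (((n : ℝ) - 1) / 2) * Real.exp (-t / 2)) := by
  have hn1 : (1 : ℝ) ≤ (n : ℝ) := by exact_mod_cast hn
  have ht0 : (0 : ℝ) < t := lt_of_lt_of_le (by nlinarith) ht
  set s := Real.sqrt t with hs_def
  have hs0 : (0 : ℝ) < s := Real.sqrt_pos.2 ht0
  set f : EuclideanSpace ℝ (Fin n) → ℝ := fun x => Real.exp (-‖x‖ ^ 2 / 2) with hf_def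
  have hint : Integrable f := gaussian_integrable_aux n
  set vol := (volume (Metric.ball (0 : EuclideanSpace ℝ (Fin n)) 1)).toReal with hvol_def
  have hvol0 : 0 ≤ vol := ENNReal.toReal_nonneg
  have hball_eq : {x : EuclideanSpace ℝ (Fin n) | ‖x‖ < s} = Metric.ball 0 s := by
    ext x; simp [Metric.mem_ball, dist_zero_right]
  have key1 : (∫ x in Ω, f x) - (∫ x in Metric.ball (0 : EuclideanSpace ℝ (Fin n)) s, f x)
      = ∫ x in Ω \ Metric.ball (0 : EuclideanSpace ℝ (Fin n)) s, f x :=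
    (integral_diff measurableSet_ball hint.integrableOn hball).symm
  have key2 : (∫ x in Ω \ Metric.ball (0 : EuclideanSpace ℝ (Fin n)) s, f x)
      ≤ ∫ x in (Metric.ball (0 : EuclideanSpace ℝ (Fin n)) s)ᶜ, f x :=
    setIntegral_mono_set hint.integrableOn
      (Filter.Eventually.of_forall fun x => Real.exp_nonneg _)
      (HasSubset.Subset.eventuallyLE (diff_subset_compl _ _))
  have key3 := polar_aux n hn hs0
  have key4 := radial_bound_aux n hn ht
  have hrpow : s ^ (n - 1) = t ^ (((n : ℝ) - 1) / 2) := by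
    rw [hs_def, Real.sqrt_eq_rpow, ← Real.rpow_natCast (t ^ ((1:ℝ) / 2)) (n - 1),
      ← Real.rpow_mul ht0.le]
    congr 1
    rw [Nat.cast_sub hn]
    push_cast
    ring
  have hc0 : (0 : ℝ) ≤ (2 * Real.pi) ^ (-(n : ℝ) / 2) :=
    Real.rpow_nonneg (by positivity) _
  have hfinal : (∫ x in Ω, f x) - (∫ x in {x : EuclideanSpace ℝ (Fin n) | ‖x‖ < s}, f x)
      ≤ (n : ℝ) * vol * (2 * (s ^ (n - 1) * Real.exp (-t / 2))) := by
    rw [hball_eq, key1]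
    calc (∫ x in Ω \ Metric.ball (0 : EuclideanSpace ℝ (Fin n)) s, f x)
        ≤ ∫ x in (Metric.ball (0 : EuclideanSpace ℝ (Fin n)) s)ᶜ, f x := key2
      _ = (n : ℝ) * vol * ∫ y in Ici s, y ^ (n - 1) * Real.exp (-y ^ 2 / 2) := key3
      _ ≤ (n : ℝ) * vol * (2 * (s ^ (n - 1) * Real.exp (-t / 2))) :=
          mul_le_mul_of_nonneg_left key4 (by positivity)
  calc (2 * Real.pi) ^ (-(n : ℝ) / 2) *
        ((∫ x in Ω, f x) - ∫ x in {x : EuclideanSpace ℝ (Fin n) | ‖x‖ < s}, f x)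
      ≤ (2 * Real.pi) ^ (-(n : ℝ) / 2) *
        ((n : ℝ) * vol * (2 * (s ^ (n - 1) * Real.exp (-t / 2)))) :=
        mul_le_mul_of_nonneg_left hfinal hc0
    _ = 2 * (n : ℝ) * vol * (2 * Real.pi) ^ (-(n : ℝ) / 2) *
        (t ^ (((n : ℝ) - 1) / 2) * Real.exp (-t / 2)) := by
        rw [← hrpow]; ring
end

section
/- Let N ≥ 1 and ζ : Fin N → ℝ. Define the N × N real matrix M by: for each row i with i < N − 1, M(i, i) = ζ(i), M(i, i+1) = −ζ(i+1), and M(i, j) = 0 for all other columns j; and the last row is all ones, M(N−1, j) = 1 for every j. Then det M = Σ_{j=0}^{N−1} ∏_{i ≠ j} ζ(i). In particular, if ζ(i) > 0 for all i then det M = (∏_i ζ(i)) · (Σ_i ζ(i)⁻¹) > 0. -/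
open Finset Matrix

/-- The Jacobian matrix of the balance equations: diagonal entries `ζ(i)`,
superdiagonal entries `−ζ(i+1)`, a last row of all ones, and zeros elsewhere. -/
def balanceMatrix (N : ℕ) (ζ : Fin N → ℝ) : Matrix (Fin N) (Fin N) ℝ :=
  fun i j =>
    if (i : ℕ) = N - 1 then 1
    else if j = i then ζ i
    else if (j : ℕ) = (i : ℕ) + 1 then -ζ j
    else 0

lemma erase_zero_eq (n : ℕ) :
    (Finset.univ : Finset (Fin (n + 2))).erase 0 = Finset.univ.image Fin.succ := by
  ext i
  simp only [mem_erase, mem_image, mem_univ, and_true, true_and, exists_true_left]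
  constructor
  · intro h0
    exact Fin.exists_succ_eq.mpr h0
  · rintro ⟨k, rfl⟩
    exact Fin.succ_ne_zero k

lemma erase_erase_eq (n : ℕ) (j : Fin (n + 1)) :
    ((Finset.univ : Finset (Fin (n + 2))).erase (Fin.succ j)).erase 0 =
      (Finset.univ.erase j).image Fin.succ := by
  ext i
  simp only [mem_erase, mem_image, mem_univ, and_true, true_and]
  constructor
  · rintro ⟨h0, hj⟩
    obtain ⟨k, rfl⟩ := Fin.exists_succ_eq.mpr h0
    exact ⟨k, fun h => hj (by rw [h]), rfl⟩
  · rintro ⟨k, hk, rfl⟩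
    exact ⟨Fin.succ_ne_zero k, fun h => hk (Fin.succ_injective _ h)⟩

lemma balanceMatrix_det_aux (n : ℕ) (ζ : Fin (n + 1) → ℝ) :
    (balanceMatrix (n + 1) ζ).det = ∑ j : Fin (n + 1), ∏ i ∈ Finset.univ.erase j, ζ i := by
  induction n with
  | zero =>
    simp [balanceMatrix, Matrix.det_fin_one]
  | succ n ih =>
    rw [Matrix.det_succ_column_zero]
    have hM00 : balanceMatrix (n + 2) ζ 0 0 = ζ 0 := by
      simp [balanceMatrix]
    have hMl0 : balanceMatrix (n + 2) ζ (Fin.last (n + 1)) 0 = 1 := by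
      simp [balanceMatrix]
    -- sum has only two nonzero terms
    have hsum :
        (∑ i : Fin (n + 2), (-1 : ℝ) ^ (i : ℕ) * balanceMatrix (n + 2) ζ i 0 *
            ((balanceMatrix (n + 2) ζ).submatrix i.succAbove Fin.succ).det) =
          ((-1 : ℝ) ^ ((0 : Fin (n + 2)) : ℕ) * balanceMatrix (n + 2) ζ 0 0 *
            ((balanceMatrix (n + 2) ζ).submatrix (0 : Fin (n + 2)).succAbove Fin.succ).det) +
          ((-1 : ℝ) ^ ((Fin.last (n + 1) : Fin (n + 2)) : ℕ) *
            balanceMatrix (n + 2) ζ (Fin.last (n + 1)) 0 *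
            ((balanceMatrix (n + 2) ζ).submatrix (Fin.last (n + 1)).succAbove Fin.succ).det) := by
      apply Finset.sum_eq_add (0 : Fin (n + 2)) (Fin.last (n + 1))
      · intro h
        have := congrArg Fin.val h
        simp at this
      · intro c _ hc
        have h1 : balanceMatrix (n + 2) ζ c 0 = 0 := by
          have hc0 : (c : ℕ) ≠ 0 := fun h => hc.1 (Fin.ext h)
          have hcl : (c : ℕ) ≠ n + 1 := fun h => hc.2 (Fin.ext (by simp [h]))
          simp only [balanceMatrix]
          rw [if_neg (by simpa using hcl), if_neg (fun h => hc0 (by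
            have := congrArg Fin.val h; simpa using this.symm)), if_neg (by simp)]
        rw [h1, mul_zero, zero_mul]
      · intro h; exact absurd (Finset.mem_univ _) h
      · intro h; exact absurd (Finset.mem_univ _) h
    rw [hsum]
    -- first minor is the smaller balance matrix
    have hminor0 : (balanceMatrix (n + 2) ζ).submatrix (0 : Fin (n + 2)).succAbove Fin.succ =
        balanceMatrix (n + 1) (ζ ∘ Fin.succ) := by
      ext i j
      simp only [Matrix.submatrix_apply, Fin.succAbove_zero, balanceMatrix, Function.comp,
        Fin.val_succ, Fin.succ_inj,
        show ((i:ℕ) + 1 = n + 2 - 1) = ((i:ℕ) = n + 1 - 1) from by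
          apply propext; omega,
        show ((j:ℕ) + 1 = (i:ℕ) + 1 + 1) = ((j:ℕ) = (i:ℕ) + 1) from by
          apply propext; omega]
    -- last minor is lower triangular
    have hminorl :
        ((balanceMatrix (n + 2) ζ).submatrix (Fin.last (n + 1)).succAbove Fin.succ).det =
          ∏ i : Fin (n + 1), -ζ i.succ := by
      rw [Matrix.det_of_lowerTriangular]
      · apply Finset.prod_congr rfl
        intro i _
        simp only [Matrix.submatrix_apply, Fin.succAbove_last, balanceMatrix, Fin.val_succ,
          Fin.coe_castSucc]
        have h1 : (i : ℕ) ≠ (n + 2) - 1 := by omega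
        have h2 : ¬ (Fin.succ i = Fin.castSucc i) := by
          intro h
          have := congrArg Fin.val h
          simp at this
        rw [if_neg h1, if_neg h2]
        simp
      · intro i j hij
        have hlt : (i : Fin (n + 1)) < j := hij
        simp only [Matrix.submatrix_apply, Fin.succAbove_last, balanceMatrix, Fin.val_succ,
          Fin.coe_castSucc]
        have hv : (i : ℕ) < (j : ℕ) := hlt
        rw [if_neg (by omega), if_neg (by
          intro h; have := congrArg Fin.val h; simp at this; omega),
          if_neg (by omega)]
    rw [hminor0, hminorl, ih, hM00, hMl0]
    have hprodneg : (∏ i : Fin (n + 1), -ζ i.succ) =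
        (-1 : ℝ) ^ (n + 1) * ∏ i : Fin (n + 1), ζ i.succ := by
      rw [show (∏ i : Fin (n + 1), -ζ i.succ) =
          ∏ i : Fin (n + 1), (-1 : ℝ) * ζ i.succ from
        Finset.prod_congr rfl fun i _ => by ring]
      rw [Finset.prod_mul_distrib, Finset.prod_const, Finset.card_univ, Fintype.card_fin]
    rw [hprodneg]
    -- now rewrite RHS
    conv_rhs => rw [Fin.sum_univ_succ]
    have h0 : (∏ i ∈ (Finset.univ : Finset (Fin (n + 2))).erase 0, ζ i) =
        ∏ i : Fin (n + 1), ζ i.succ := by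
      rw [erase_zero_eq, Finset.prod_image (fun a _ b _ h => Fin.succ_injective _ h)]
    have hsucc : ∀ j : Fin (n + 1),
        (∏ i ∈ (Finset.univ : Finset (Fin (n + 2))).erase (Fin.succ j), ζ i) =
          ζ 0 * ∏ i ∈ Finset.univ.erase j, ζ i.succ := by
      intro j
      have h0mem : (0 : Fin (n + 2)) ∈ (Finset.univ : Finset (Fin (n + 2))).erase (Fin.succ j) :=
        Finset.mem_erase.mpr ⟨(Fin.succ_ne_zero j).symm, Finset.mem_univ _⟩
      rw [← Finset.mul_prod_erase _ _ h0mem, erase_erase_eq,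
        Finset.prod_image (fun a _ b _ h => Fin.succ_injective _ h)]
    have hsumcongr : (∑ j : Fin (n + 1),
        ∏ i ∈ (Finset.univ : Finset (Fin (n + 2))).erase (Fin.succ j), ζ i) =
        ζ 0 * ∑ j : Fin (n + 1), ∏ i ∈ Finset.univ.erase j, ζ i.succ := by
      rw [Finset.mul_sum]
      exact Finset.sum_congr rfl fun j _ => hsucc j
    rw [h0, hsumcongr]
    simp only [Fin.val_zero, Fin.val_last, pow_zero, one_mul, mul_one, Function.comp]
    rw [← mul_assoc, ← pow_add, Even.neg_one_pow ⟨n + 1, by ring⟩, one_mul]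
    ring

/-- Determinant of the balance-equation Jacobian:
`det M = Σ_j ∏_{i ≠ j} ζ(i)`; in particular, if all `ζ(i) > 0` then
`det M = (∏ ζ(i))·(Σ ζ(i)⁻¹) > 0`. -/
theorem balanceMatrix_det (N : ℕ) (hN : 1 ≤ N) (ζ : Fin N → ℝ) :
    (balanceMatrix N ζ).det = ∑ j : Fin N, ∏ i ∈ Finset.univ.erase j, ζ i ∧
    ((∀ i, 0 < ζ i) →
      (balanceMatrix N ζ).det = (∏ i, ζ i) * (∑ i, (ζ i)⁻¹) ∧
      0 < (balanceMatrix N ζ).det) := by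
  obtain ⟨n, rfl⟩ : ∃ n, N = n + 1 := ⟨N - 1, by omega⟩
  have hdet := balanceMatrix_det_aux n ζ
  refine ⟨hdet, fun hpos => ?_⟩
  constructor
  · rw [hdet, Finset.mul_sum]
    apply Finset.sum_congr rfl
    intro j _
    have hj : ζ j ≠ 0 := (hpos j).ne'
    rw [← Finset.mul_prod_erase _ _ (Finset.mem_univ j)]
    field_simp

  · rw [hdet]
    apply Finset.sum_pos
    · intro j _
      exact Finset.prod_pos fun i _ => hpos i
    · exact Finset.univ_nonempty
end

section
/- Let σ > 0, v > 0, m ∈ ℝ, y ∈ ℝ, and let Y : ℕ → ℝ be a sequence such that the sample means ȳ_t = (1/t)·Σ_{h<t} Y_h converge to y as t → ∞. Define σ*²_t = (t/σ² + 1/v)⁻¹ and μ*_t = σ*²_t·(Σ_{h<t} Y_h/σ² + m/v). Then lim_{t→∞} [ μ*_t²/σ*²_t − ( t·ȳ_t²/σ² − ȳ_t²/v + 2·ȳ_t·m/v ) ] = 0. -/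
open Real Filter Finset Topology

/-- Asymptotic expansion of the quadratic exponent `μ*²/σ*²`: it equals
`t·ȳ_t²/σ² − ȳ_t²/v + 2·ȳ_t·m/v` up to a term vanishing as `t → ∞`. -/
theorem posterior_exponent_expansion
    (σ v m y : ℝ) (hσ : 0 < σ) (hv : 0 < v) (Y : ℕ → ℝ)
    (hY : Tendsto (fun t : ℕ => (1 / (t : ℝ)) * ∑ h ∈ Finset.range t, Y h)
      atTop (𝓝 y)) :
    Tendsto (fun t : ℕ =>
        (postMean σ Y m v t) ^ 2 / postVar σ v t -
          ((t : ℝ) * ((1 / (t : ℝ)) * ∑ h ∈ Finset.range t, Y h) ^ 2 / σ ^ 2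
            - ((1 / (t : ℝ)) * ∑ h ∈ Finset.range t, Y h) ^ 2 / v
            + 2 * ((1 / (t : ℝ)) * ∑ h ∈ Finset.range t, Y h) * m / v))
      atTop (𝓝 0) := by

  have hσ2 : (σ:ℝ)^2 ≠ 0 := by positivity
  have hv0 : v ≠ 0 := ne_of_gt hv
  -- the difference eventually equals (1/v)^2*(m - ȳ)^2 / (t/σ²+1/v)
  have heq : ∀ᶠ t : ℕ in atTop,
      ((1/v)^2 * (m - (1 / (t : ℝ)) * ∑ h ∈ Finset.range t, Y h) ^ 2) /
        ((t : ℝ) / σ ^ 2 + 1 / v) =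
      (postMean σ Y m v t) ^ 2 / postVar σ v t -
          ((t : ℝ) * ((1 / (t : ℝ)) * ∑ h ∈ Finset.range t, Y h) ^ 2 / σ ^ 2
            - ((1 / (t : ℝ)) * ∑ h ∈ Finset.range t, Y h) ^ 2 / v
            + 2 * ((1 / (t : ℝ)) * ∑ h ∈ Finset.range t, Y h) * m / v) := by
    filter_upwards [eventually_ge_atTop 1] with t ht
    have ht0 : (t : ℝ) ≠ 0 := by positivity
    have hd : (t : ℝ) / σ ^ 2 + 1 / v ≠ 0 := by positivity
    simp only [postMean, postVar]
    rw [inv_eq_one_div]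
    field_simp
    ring
  have hden : Tendsto (fun t : ℕ => (t : ℝ) / σ ^ 2 + 1 / v) atTop atTop := by
    apply tendsto_atTop_add_const_right
    exact (tendsto_natCast_atTop_atTop).atTop_div_const (by positivity)
  have hnum : Tendsto (fun t : ℕ =>
      (1/v)^2 * (m - (1 / (t : ℝ)) * ∑ h ∈ Finset.range t, Y h) ^ 2)
      atTop (𝓝 ((1/v)^2 * (m - y)^2)) :=
    tendsto_const_nhds.mul (((tendsto_const_nhds.sub hY).pow 2))
  exact Tendsto.congr' heq (hnum.div_atTop hden)
end

section
/- Let σ > 0, v > 0, m ∈ ℝ, y ∈ ℝ, and let Y : ℕ → ℝ be a sequence with (1/t)·Σ_{h<t} Y_h → y as t → ∞. Define σ*²_t = (t/σ² + 1/v)⁻¹, μ*_t = σ*²_t·(Σ_{h<t} Y_h/σ² + m/v), and C_t = (2πσ²)^{-t/2} · √(σ*²_t/v) · exp{(1/2)[μ*_t²/σ*²_t − Σ_{h<t} Y_h²/σ² − m²/v]}. Define the one-step-ahead quantities obtained by appending the posterior mean μ*_t as a (t+1)-th observation: σ⁺²_t = ((t+1)/σ² + 1/v)⁻¹, μ⁺_t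 = σ⁺²_t·((Σ_{h<t} Y_h + μ*_t)/σ² + m/v), and C⁺_t = (2πσ²)^{-(t+1)/2} · √(σ⁺²_t/v) · exp{(1/2)[(μ⁺_t)²/σ⁺²_t − (Σ_{h<t} Y_h² + (μ*_t)²)/σ² − m²/v]}. Then lim_{t→∞} [ C⁺_t/C_t − (2πσ²)^{-1/2}·exp{ −(μ*_t − m)²·(σ*²_t)²/(2σ²v²) } ] = 0. -/
open Real Filter Finset Topology

/-- One-step-ahead posterior variance `σ⁺²_t = ((t+1)/σ² + 1/v)⁻¹`. -/
noncomputable def postVarPlus (σ v : ℝ) (t : ℕ) : ℝ := postVar σ v (t + 1)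

/-- One-step-ahead posterior mean obtained by appending the current posterior mean
`μ*_t` as a `(t+1)`-th observation. -/
noncomputable def postMeanPlus (σ : ℝ) (Y : ℕ → ℝ) (m v : ℝ) (t : ℕ) : ℝ :=
  postVarPlus σ v t *
    (((∑ h ∈ Finset.range t, Y h) + postMean σ Y m v t) / σ ^ 2 + m / v)

/-- One-step-ahead marginal-likelihood constant obtained by appending the current
posterior mean `μ*_t` as a `(t+1)`-th observation. -/
noncomputable def CmargPlus (σ : ℝ) (Y : ℕ → ℝ) (m v : ℝ) (t : ℕ) : ℝ :=
  (2 * Real.pi * σ ^ 2) ^ (-((t : ℝ) + 1) / 2) *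
    Real.sqrt (postVarPlus σ v t / v) *
    Real.exp ((1 / 2) *
      ((postMeanPlus σ Y m v t) ^ 2 / postVarPlus σ v t
        - ((∑ h ∈ Finset.range t, (Y h) ^ 2) + (postMean σ Y m v t) ^ 2) / σ ^ 2
        - m ^ 2 / v))

lemma postVar_pos {σ v : ℝ} (hσ : 0 < σ) (hv : 0 < v) (t : ℕ) :
    0 < postVar σ v t := by
  unfold postVar; positivity

lemma postMeanPlus_eq {σ v : ℝ} (hσ : 0 < σ) (hv : 0 < v) (Y : ℕ → ℝ) (m : ℝ) (t : ℕ) :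
    postMeanPlus σ Y m v t = postMean σ Y m v t := by
  have h1 : (t : ℝ) / σ ^ 2 + 1 / v ≠ 0 := by positivity
  have h2 : ((t : ℝ) + 1) / σ ^ 2 + 1 / v ≠ 0 := by positivity
  have hσ' : (σ : ℝ) ^ 2 ≠ 0 := by positivity
  have hv' : (v : ℝ) ≠ 0 := ne_of_gt hv
  unfold postMeanPlus postMean postVarPlus postVar
  push_cast
  field_simp
  ring

lemma CmargPlus_eq {σ v : ℝ} (hσ : 0 < σ) (hv : 0 < v) (Y : ℕ → ℝ) (m : ℝ) (t : ℕ) :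
    CmargPlus σ Y m v t =
      (2 * Real.pi * σ ^ 2) ^ (-(1 : ℝ) / 2) *
        Real.sqrt (postVarPlus σ v t / postVar σ v t) * Cmarg σ Y m v t := by
  have h2π : (0 : ℝ) < 2 * Real.pi * σ ^ 2 := by positivity
  have hpv : 0 < postVar σ v t := postVar_pos hσ hv t
  have hpv' : 0 < postVarPlus σ v t := postVar_pos hσ hv (t + 1)
  have hinv : (postVarPlus σ v t)⁻¹ = (postVar σ v t)⁻¹ + (σ ^ 2)⁻¹ := by
    unfold postVarPlus postVar
    rw [inv_inv, inv_inv]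
    push_cast; ring
  have hr : (2 * Real.pi * σ ^ 2) ^ (-((t : ℝ) + 1) / 2)
      = (2 * Real.pi * σ ^ 2) ^ (-(1 : ℝ) / 2)
        * (2 * Real.pi * σ ^ 2) ^ (-(t : ℝ) / 2) := by
    rw [← Real.rpow_add h2π]; ring_nf
  have hs : Real.sqrt (postVarPlus σ v t / v)
      = Real.sqrt (postVarPlus σ v t / postVar σ v t) * Real.sqrt (postVar σ v t / v) := by
    rw [← Real.sqrt_mul (by positivity)]
    congr 1
    field_simp
  have he : (1 / 2 : ℝ) *
      ((postMean σ Y m v t) ^ 2 / postVarPlus σ v t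
        - ((∑ h ∈ Finset.range t, (Y h) ^ 2) + (postMean σ Y m v t) ^ 2) / σ ^ 2
        - m ^ 2 / v)
      = (1 / 2 : ℝ) *
      ((postMean σ Y m v t) ^ 2 / postVar σ v t
        - (∑ h ∈ Finset.range t, (Y h) ^ 2) / σ ^ 2 - m ^ 2 / v) := by
    rw [div_eq_mul_inv ((postMean σ Y m v t) ^ 2), hinv]
    ring
  unfold CmargPlus Cmarg
  rw [postMeanPlus_eq hσ hv, hr, hs, he]
  ring

lemma Cmarg_pos {σ v : ℝ} (hσ : 0 < σ) (hv : 0 < v) (Y : ℕ → ℝ) (m : ℝ) (t : ℕ) :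
    0 < Cmarg σ Y m v t := by
  have h2π : (0 : ℝ) < 2 * Real.pi * σ ^ 2 := by positivity
  have hpv : 0 < postVar σ v t := postVar_pos hσ hv t
  unfold Cmarg
  exact mul_pos (mul_pos (Real.rpow_pos_of_pos h2π _)
    (Real.sqrt_pos.mpr (div_pos hpv hv))) (Real.exp_pos _)

/-- One-step-ahead likelihood ratio under the certainty-equivalent approximation:
the change rate of the marginal-likelihood constant converges to the explicit
exponential expression. -/
theorem one_step_ahead_likelihood_ratio
    (σ v m y : ℝ) (hσ : 0 < σ) (hv : 0 < v) (Y : ℕ → ℝ)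
    (hY : Tendsto (fun t : ℕ => (1 / (t : ℝ)) * ∑ h ∈ Finset.range t, Y h)
      atTop (𝓝 y)) :
    Tendsto (fun t : ℕ =>
        CmargPlus σ Y m v t / Cmarg σ Y m v t -
          (2 * Real.pi * σ ^ 2) ^ (-(1 : ℝ) / 2) *
            Real.exp (-((postMean σ Y m v t - m) ^ 2 * (postVar σ v t) ^ 2 /
              (2 * σ ^ 2 * v ^ 2))))
      atTop (𝓝 0) := by
  have hσ2 : (0 : ℝ) < σ ^ 2 := by positivity
  -- postVar tends to 0
  have hden : Tendsto (fun t : ℕ => (t : ℝ) / σ ^ 2 + 1 / v) atTop atTop :=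
    tendsto_atTop_add_const_right _ _
      (tendsto_natCast_atTop_atTop.atTop_div_const hσ2)
  have hpv0 : Tendsto (fun t : ℕ => postVar σ v t) atTop (𝓝 0) := by
    have := tendsto_inv_atTop_zero.comp hden
    simpa [postVar, Function.comp_def] using this
  have hpv1 : Tendsto (fun t : ℕ => postVar σ v (t + 1)) atTop (𝓝 0) :=
    hpv0.comp (tendsto_add_atTop_nat 1)
  -- ratio postVarPlus / postVar tends to 1
  have hrId : ∀ t : ℕ, postVarPlus σ v t / postVar σ v t
      = 1 - postVar σ v (t + 1) / σ ^ 2 := by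
    intro t
    have h1 : (t : ℝ) / σ ^ 2 + 1 / v ≠ 0 := by positivity
    have h2 : ((t : ℝ) + 1) / σ ^ 2 + 1 / v ≠ 0 := by
      have : (0:ℝ) < ((t : ℝ) + 1) / σ ^ 2 + 1 / v := by positivity
      exact ne_of_gt this
    unfold postVarPlus postVar
    push_cast
    field_simp
    ring
  have hrat : Tendsto (fun t : ℕ => postVarPlus σ v t / postVar σ v t) atTop (𝓝 1) := by
    have h := (tendsto_const_nhds : Tendsto (fun _ : ℕ => (1 : ℝ)) atTop (𝓝 1)).sub
      (hpv1.div_const (σ ^ 2))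
    refine Tendsto.congr (fun t => (hrId t).symm) ?_
    simpa using h
  have hsqrt : Tendsto (fun t : ℕ => Real.sqrt (postVarPlus σ v t / postVar σ v t))
      atTop (𝓝 1) := by
    have := hrat.sqrt
    simpa using this
  -- t * postVar tends to σ²
  have htp : Tendsto (fun t : ℕ => (t : ℝ) * postVar σ v t) atTop (𝓝 (σ ^ 2)) := by
    have h1 : Tendsto (fun t : ℕ => 1 / σ ^ 2 + (1 / v) / (t : ℝ)) atTop
        (𝓝 (1 / σ ^ 2)) := by
      have := (tendsto_const_nhds : Tendsto (fun _ : ℕ => 1 / σ ^ 2) atTop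
          (𝓝 (1 / σ ^ 2))).add (tendsto_const_div_atTop_nhds_zero_nat (1 / v))
      simpa using this
    have h2 := h1.inv₀ (by positivity : (1 : ℝ) / σ ^ 2 ≠ 0)
    have h3 : ((1 : ℝ) / σ ^ 2)⁻¹ = σ ^ 2 := by field_simp
    rw [h3] at h2
    refine h2.congr' ?_
    filter_upwards [eventually_ge_atTop 1] with t ht
    have ht0' : (0 : ℝ) < (t : ℝ) := by exact_mod_cast Nat.lt_of_lt_of_le Nat.zero_lt_one ht
    have hA : (t : ℝ) / σ ^ 2 + 1 / v ≠ 0 := by positivity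
    have hB : 1 / σ ^ 2 + (1 / v) / (t : ℝ) ≠ 0 := by positivity
    unfold postVar
    field_simp
  -- postMean tends to y
  have hpm : Tendsto (fun t : ℕ => postMean σ Y m v t) atTop (𝓝 y) := by
    have hA := (htp.mul hY).div_const (σ ^ 2)
    have hB := hpv0.mul_const (m / v)
    have hC := hA.add hB
    have hval : σ ^ 2 * y / σ ^ 2 + 0 * (m / v) = y := by field_simp; ring
    rw [hval] at hC
    refine hC.congr' ?_
    filter_upwards [eventually_ge_atTop 1] with t ht
    have ht0' : (0 : ℝ) < (t : ℝ) := by exact_mod_cast Nat.lt_of_lt_of_le Nat.zero_lt_one ht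
    have hσ' : (σ : ℝ) ^ 2 ≠ 0 := by positivity
    unfold postMean
    field_simp
  -- the exponential term tends to 1
  have hexp : Tendsto (fun t : ℕ =>
      Real.exp (-((postMean σ Y m v t - m) ^ 2 * (postVar σ v t) ^ 2 /
        (2 * σ ^ 2 * v ^ 2)))) atTop (𝓝 1) := by
    have hd : Tendsto (fun t : ℕ =>
        (postMean σ Y m v t - m) ^ 2 * (postVar σ v t) ^ 2) atTop
        (𝓝 ((y - m) ^ 2 * 0 ^ 2)) :=
      ((hpm.sub_const m).pow 2).mul (hpv0.pow 2)
    have hs0 : Tendsto (fun t : ℕ =>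
        -((postMean σ Y m v t - m) ^ 2 * (postVar σ v t) ^ 2 /
          (2 * σ ^ 2 * v ^ 2))) atTop (𝓝 0) := by
      have := (hd.div_const (2 * σ ^ 2 * v ^ 2)).neg
      simpa using this
    have := (Real.continuous_exp.tendsto 0).comp hs0
    simpa [Function.comp_def, Real.exp_zero] using this
  -- combine
  have heq : ∀ t : ℕ, CmargPlus σ Y m v t / Cmarg σ Y m v t
      = (2 * Real.pi * σ ^ 2) ^ (-(1 : ℝ) / 2) *
          Real.sqrt (postVarPlus σ v t / postVar σ v t) := by
    intro t
    rw [CmargPlus_eq hσ hv, mul_div_assoc,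
      div_self (ne_of_gt (Cmarg_pos hσ hv Y m t)), mul_one]
  simp only [heq]
  have final := (hsqrt.sub hexp).const_mul
    ((2 * Real.pi * σ ^ 2) ^ (-(1 : ℝ) / 2))
  simpa [mul_sub] using final
end

section
/- Let σ > 0, m ∈ ℝ, v > 0, and let Y : ℕ → ℝ be a sequence whose sample means ȳ_t = (1/t)·Σ_{h<t} Y_h are convergent as t → ∞. Let (v_t) and (v'_t) be sequences of positive reals with v_t → v and v'_t → v. For u > 0 define σ*²_t(u) = (t/σ² + 1/u)⁻¹, μ*_t(u) = σ*²_t(u)·(Σ_{h<t} Y_h/σ² + m/u), and C_t(u) = (2πσ²)^{-t/2} · √(σ*²_t(u)/u) · exp{(1/2)[μ*_t(u)²/σ*²_t(u) − Σ_{h<t} Y_h²/σ² − m²/u]}. Then C_t(v'_t)/C_t(v_t) → 1 as t → ∞. -/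
open Real Filter Finset Topology

/-- Insensitivity of the likelihood factors: if the cluster-variance
hyper-parameters `v_t` and `v'_t` both converge to the same positive limit `v`
and the sample means converge, then the ratio of the corresponding
marginal-likelihood constants converges to `1`. -/
theorem likelihood_ratio_tendsto_one_of_hyperparams_same_limit
    (σ m v : ℝ) (hσ : 0 < σ) (hv : 0 < v) (Y : ℕ → ℝ)
    (hY : ∃ L : ℝ, Tendsto (fun t : ℕ => (1 / (t : ℝ)) * ∑ h ∈ Finset.range t, Y h)
      atTop (𝓝 L))
    (vseq vseq' : ℕ → ℝ) (hvseq : ∀ t, 0 < vseq t) (hvseq' : ∀ t, 0 < vseq' t)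
    (hvlim : Tendsto vseq atTop (𝓝 v)) (hvlim' : Tendsto vseq' atTop (𝓝 v)) :
    Tendsto (fun t : ℕ => Cmarg σ Y m (vseq' t) t / Cmarg σ Y m (vseq t) t)
      atTop (𝓝 1) := by
  obtain ⟨L, hL⟩ := hY
  have hσ2 : (0:ℝ) < σ ^ 2 := by positivity
  have h1t : Tendsto (fun t : ℕ => 1 / (t:ℝ)) atTop (𝓝 0) :=
    tendsto_one_div_atTop_nhds_zero_nat
  have hd : Tendsto (fun t : ℕ => vseq t / σ^2 + 1/(t:ℝ)) atTop (𝓝 (v / σ^2)) := by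
    simpa using (hvlim.div_const (σ^2)).add h1t
  have hd' : Tendsto (fun t : ℕ => vseq' t / σ^2 + 1/(t:ℝ)) atTop (𝓝 (v / σ^2)) := by
    simpa using (hvlim'.div_const (σ^2)).add h1t
  have hvσ : v / σ^2 ≠ 0 := by positivity
  have hsqrt : Tendsto (fun t : ℕ => Real.sqrt ((vseq t / σ^2 + 1/(t:ℝ)) /
      (vseq' t / σ^2 + 1/(t:ℝ)))) atTop (𝓝 1) := by
    have h := hd.div hd' hvσ
    rw [div_self hvσ] at h
    have := (Real.continuous_sqrt.tendsto 1).comp h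
    simpa [Function.comp_def] using this
  have hexp : Tendsto (fun t : ℕ => Real.exp ((1/2) * ((vseq' t - vseq t) *
      ((1/(t:ℝ)) * (∑ h ∈ Finset.range t, Y h) - m)^2 / σ^4 /
      ((vseq' t / σ^2 + 1/(t:ℝ)) * (vseq t / σ^2 + 1/(t:ℝ)))))) atTop (𝓝 1) := by
    have h0 : Tendsto (fun t : ℕ => vseq' t - vseq t) atTop (𝓝 0) := by
      simpa using hvlim'.sub hvlim
    have hy : Tendsto (fun t : ℕ => ((1/(t:ℝ)) * (∑ h ∈ Finset.range t, Y h) - m)^2)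
        atTop (𝓝 ((L - m)^2)) := (hL.sub tendsto_const_nhds).pow 2
    have hden : Tendsto (fun t : ℕ => (vseq' t / σ^2 + 1/(t:ℝ)) * (vseq t / σ^2 + 1/(t:ℝ)))
        atTop (𝓝 ((v/σ^2) * (v/σ^2))) := hd'.mul hd
    have harg := (((h0.mul hy).div_const (σ^4)).div hden
      (by positivity)).const_mul ((1:ℝ)/2)
    have harg0 : Tendsto (fun t : ℕ => (1/2) * ((vseq' t - vseq t) *
        ((1/(t:ℝ)) * (∑ h ∈ Finset.range t, Y h) - m)^2 / σ^4 /
        ((vseq' t / σ^2 + 1/(t:ℝ)) * (vseq t / σ^2 + 1/(t:ℝ))))) atTop (𝓝 0) := by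
      simpa using harg
    have := (Real.continuous_exp.tendsto 0).comp harg0
    simpa [Function.comp_def] using this
  have hFlim := hsqrt.mul hexp
  rw [one_mul] at hFlim
  refine hFlim.congr' ?_
  filter_upwards [eventually_ge_atTop 1] with t ht
  have ht0 : (0:ℝ) < (t:ℝ) := by exact_mod_cast Nat.lt_of_lt_of_le Nat.zero_lt_one ht
  have hu : (0:ℝ) < vseq t := hvseq t
  have hu' : (0:ℝ) < vseq' t := hvseq' t
  have hA : (0:ℝ) < (t:ℝ)/σ^2 + 1/(vseq t) := by positivity
  have hA' : (0:ℝ) < (t:ℝ)/σ^2 + 1/(vseq' t) := by positivity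
  have hP : (0:ℝ) < (2*Real.pi*σ^2) ^ (-(t:ℝ)/2) :=
    Real.rpow_pos_of_pos (by positivity) _
  have hpv : (0:ℝ) < postVar σ (vseq t) t := by
    rw [postVar]; positivity
  have hpv' : (0:ℝ) < postVar σ (vseq' t) t := by
    rw [postVar]; positivity
  have hx : (0:ℝ) < postVar σ (vseq t) t / vseq t := by positivity
  have hx' : (0:ℝ) < postVar σ (vseq' t) t / vseq' t := by positivity
  have hB : (0:ℝ) < vseq t / σ^2 + 1/(t:ℝ) := by positivity
  have hB' : (0:ℝ) < vseq' t / σ^2 + 1/(t:ℝ) := by positivity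
  -- step 1: the ratio as sqrt-ratio times exp of difference
  have key : Cmarg σ Y m (vseq' t) t / Cmarg σ Y m (vseq t) t =
      (Real.sqrt (postVar σ (vseq' t) t / vseq' t) /
        Real.sqrt (postVar σ (vseq t) t / vseq t)) *
      Real.exp ((1 / 2) * ((postMean σ Y m (vseq' t) t) ^ 2 / postVar σ (vseq' t) t
          - (∑ h ∈ Finset.range t, (Y h) ^ 2) / σ ^ 2 - m ^ 2 / vseq' t)
        - (1 / 2) * ((postMean σ Y m (vseq t) t) ^ 2 / postVar σ (vseq t) t
          - (∑ h ∈ Finset.range t, (Y h) ^ 2) / σ ^ 2 - m ^ 2 / vseq t)) := by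
    rw [Cmarg, Cmarg, Real.exp_sub]
    have hs : Real.sqrt (postVar σ (vseq t) t / vseq t) ≠ 0 :=
      (Real.sqrt_pos.mpr hx).ne'
    field_simp
  rw [key]
  congr 1
  · rw [← Real.sqrt_div hx'.le]
    congr 1
    rw [postVar, postVar]
    field_simp
  · rw [postMean, postMean, postVar, postVar]
    congr 1
    field_simp
    ring
end
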